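/- arXiv:1003.3825 — 7 statements merged into one kernel-verified Lean document; each statement's English description precedes it below -/
import Mathlib

section
/- Every finite differentiable O-sequence (h_0 = 1, h_1, …, h_e) of positive integers is a pure O-sequence. -/
/-- The degree of a monomial, given by its exponent vector. -/
def monDeg {r : ℕ} (M : Fin r → ℕ) : ℕ := ∑ j, M j

/-- `X` is a (monomial) order ideal: a nonempty finite set of monomials (exponent vectors)
closed under divisibility. -/
def IsOrderIdeal {r : ℕ} (X : Finset (Fin r → ℕ)) : Prop :=
  X.Nonempty ∧ ∀ M ∈ X, ∀ N : Fin r → ℕ, (∀ j, N j ≤ M j) → N ∈ X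

/-- `M` is a maximal monomial of `X` with respect to divisibility. -/
def IsMaxMon {r : ℕ} (X : Finset (Fin r → ℕ)) (M : Fin r → ℕ) : Prop :=
  M ∈ X ∧ ∀ N ∈ X, (∀ j, M j ≤ N j) → N = M

/-- `X` is a pure order ideal with socle degree `e`: it is an order ideal whose maximal
degree is `e` and all of whose maximal monomials have degree `e`. -/
def IsPureWithSocle {r : ℕ} (X : Finset (Fin r → ℕ)) (e : ℕ) : Prop :=
  IsOrderIdeal X ∧ (∀ M ∈ X, monDeg M ≤ e) ∧ (∃ M ∈ X, monDeg M = e) ∧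
    ∀ M, IsMaxMon X M → monDeg M = e

/-- `h` agrees in degrees `≤ e` with the h-vector of `X`. -/
def HasHVector {r : ℕ} (X : Finset (Fin r → ℕ)) (h : ℕ → ℕ) (e : ℕ) : Prop :=
  ∀ i ≤ e, h i = (X.filter fun M => monDeg M = i).card

/-- `h` is (in degrees `≤ e`) a pure O-sequence of socle degree `e`. -/
def IsPureOSeq (h : ℕ → ℕ) (e : ℕ) : Prop :=
  ∃ (r : ℕ) (X : Finset (Fin r → ℕ)), IsPureWithSocle X e ∧ HasHVector X h e

/-- `h` is a pure O-sequence of socle degree `e` and type `t`. -/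
def IsPureOSeqOfType (h : ℕ → ℕ) (e t : ℕ) : Prop :=
  ∃ (r : ℕ) (X : Finset (Fin r → ℕ)), IsPureWithSocle X e ∧ HasHVector X h e ∧
    {M : Fin r → ℕ | IsMaxMon X M}.ncard = t

/-- `((n)_(d))_1^1`, computed from the `d`-binomial (Macaulay) expansion of `n`
obtained greedily; by convention `((0)_(d))_1^1 = 0`. -/
def macaulayBound : ℕ → ℕ → ℕ
  | 0, _ => 0
  | (n+1), d =>
      Nat.choose (Nat.findGreatest (fun k => Nat.choose k d ≤ n + 1) (n + 1 + d) + 1) (d + 1) +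
        macaulayBound
          ((n + 1) - Nat.choose (Nat.findGreatest (fun k => Nat.choose k d ≤ n + 1) (n + 1 + d)) d)
          (d - 1)
  termination_by n d => n
  decreasing_by
    have hd : d ≤ Nat.findGreatest (fun k => Nat.choose k d ≤ n + 1) (n + 1 + d) :=
      Nat.le_findGreatest (by omega) (by simp [Nat.choose_self])
    have hpos := Nat.choose_pos hd
    omega

/-- `g` satisfies Macaulay's bound (in degrees `1 ≤ i ≤ e - 1`). -/
def SatisfiesMacaulay (g : ℕ → ℕ) (e : ℕ) : Prop :=
  ∀ i, 1 ≤ i → i + 1 ≤ e → g (i + 1) ≤ macaulayBound (g i) i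

/-- `h` is an O-sequence of socle degree `e`. -/
def IsOSeq (h : ℕ → ℕ) (e : ℕ) : Prop :=
  h 0 = 1 ∧ (∀ i ≤ e, 0 < h i) ∧ SatisfiesMacaulay h e

/-- `h` is differentiable: its first difference `(1, h 1 - h 0, …, h e - h (e-1))`
consists of nonnegative integers and satisfies Macaulay's bound. -/
def IsDifferentiable (h : ℕ → ℕ) (e : ℕ) : Prop :=
  h 0 = 1 ∧ (∀ i, 1 ≤ i → i ≤ e → h (i - 1) ≤ h i) ∧
    SatisfiesMacaulay (fun i => if i = 0 then 1 else h i - h (i - 1)) e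

/-!
Let `g` be the first difference of `h`. As `g` satisfies Macaulay's bound, the colex segments of
`g 0, g 1, …, g e` monomials of degrees `0, 1, …, e` together form an order ideal `F` with
h-vector `g`: the shadow of a colex segment of size at most `((n)_(d))_1^1` lies in the colex
segment of size `n`. For a variable `v` not occurring in `F`, the monomials `v ^ k * y` with
`y ∈ F` and degree at most `e` form an order ideal whose h-vector is the sequence of partial sums
of `g`, namely `h`. It is pure, since every monomial of degree `< e` divides its product with `v`.
Monomials are handled as multisets of variable indices until the very end.
-/

namespace PureOSeq

open Multiset

theorem add_one_le_add_choose (n : ℕ) {d : ℕ} (hd : 1 ≤ d) : n + 1 ≤ (n + d).choose d := by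
  induction d, hd using Nat.le_induction with
  | base => simp
  | succ d _ ih =>
    rw [← add_assoc, Nat.choose_succ_succ']
    omega

/-- The top index of the greedy `d`-binomial expansion of `n`, as it appears in `macaulayBound`. -/
def macaulayTop (n d : ℕ) : ℕ := Nat.findGreatest (fun k => k.choose d ≤ n) (n + d)

section MacaulayTop

variable {n n' d k : ℕ}

theorem one_le_of_lt_choose (hn : 1 ≤ n) (h : n < k.choose d) : 1 ≤ d := by
  by_contra! h0
  rw [Nat.lt_one_iff.mp h0, Nat.choose_zero_right] at h
  omega

theorem le_macaulayTop (hn : 1 ≤ n) : d ≤ macaulayTop n d :=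
  Nat.le_findGreatest (by omega) (by simpa using hn)

theorem choose_macaulayTop_le (hn : 1 ≤ n) : (macaulayTop n d).choose d ≤ n :=
  Nat.findGreatest_spec (P := fun k => k.choose d ≤ n) le_add_self (by simpa using hn)

theorem lt_choose_macaulayTop_succ (hd : 1 ≤ d) (hn : 1 ≤ n) :
    n < (macaulayTop n d + 1).choose d := by
  by_contra! hle
  have htop : macaulayTop n d ≤ n + d := Nat.findGreatest_le _
  rcases htop.lt_or_eq with hlt | heq
  · exact Nat.findGreatest_is_greatest (Nat.lt_succ_self _) hlt hle
  · have := choose_macaulayTop_le (d := d) hn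
    rw [heq] at this
    have := add_one_le_add_choose n hd
    omega

theorem macaulayTop_lt (hn : 1 ≤ n) (h : n < k.choose d) : macaulayTop n d < k := by
  by_contra! hle
  have := Nat.choose_le_choose d hle
  have := choose_macaulayTop_le (d := d) hn
  omega

theorem sub_choose_macaulayTop_lt_self (hn : 1 ≤ n) : n - (macaulayTop n d).choose d < n := by
  have := Nat.choose_pos (le_macaulayTop (d := d) hn)
  omega

theorem macaulayTop_mono (h : n ≤ n') : macaulayTop n d ≤ macaulayTop n' d :=
  Nat.findGreatest_mono (fun _ hk => hk.trans h) (by omega)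

theorem sub_choose_macaulayTop_lt (hd : 1 ≤ d) (hn : 1 ≤ n) :
    n - (macaulayTop n d).choose d < (macaulayTop n d).choose (d - 1) := by
  have hle := choose_macaulayTop_le (d := d) hn
  have hlt := lt_choose_macaulayTop_succ hd hn
  rw [← Nat.sub_add_cancel hd, Nat.choose_succ_succ', Nat.sub_add_cancel hd] at hlt
  omega

end MacaulayTop

theorem macaulayBound_zero (d : ℕ) : macaulayBound 0 d = 0 := by
  rw [macaulayBound]

theorem macaulayBound_eq {n d : ℕ} (hn : 1 ≤ n) :
    macaulayBound n d = (macaulayTop n d + 1).choose (d + 1) +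
      macaulayBound (n - (macaulayTop n d).choose d) (d - 1) := by
  obtain ⟨n, rfl⟩ := Nat.exists_eq_add_of_le' hn
  rw [macaulayBound]
  rfl

theorem macaulayBound_lt_choose_succ {n d k : ℕ} (h : n < k.choose d) :
    macaulayBound n d < (k + 1).choose (d + 1) := by
  induction n using Nat.strong_induction_on generalizing d k with | _ n ih =>
  rcases Nat.eq_zero_or_pos n with rfl | hn
  · have : d ≤ k := by
      by_contra! hkd
      rw [Nat.choose_eq_zero_of_lt hkd] at h
      omega
    rw [macaulayBound_zero]
    exact Nat.choose_pos (by omega)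
  have hd := one_le_of_lt_choose hn h
  have hK := macaulayTop_lt hn h
  have hrem := ih _ (sub_choose_macaulayTop_lt_self hn) (sub_choose_macaulayTop_lt hd hn)
  rw [Nat.sub_add_cancel hd] at hrem
  rw [macaulayBound_eq hn]
  set K := macaulayTop n d
  calc _ < (K + 1).choose (d + 1) + (K + 1).choose d := by omega
    _ = (K + 2).choose (d + 1) := by rw [Nat.choose_succ_succ' (K + 1) d, add_comm]
    _ ≤ (k + 1).choose (d + 1) := Nat.choose_le_choose _ (by omega)

theorem macaulayBound_le_choose_add {n d k : ℕ} (h : n < k.choose d) :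
    macaulayBound n d ≤ k.choose (d + 1) + n := by
  induction n using Nat.strong_induction_on generalizing d k with | _ n ih =>
  rcases Nat.eq_zero_or_pos n with rfl | hn
  · simp [macaulayBound_zero]
  have hd := one_le_of_lt_choose hn h
  have hK := macaulayTop_lt hn h
  have hle := choose_macaulayTop_le (d := d) hn
  have hrem := ih _ (sub_choose_macaulayTop_lt_self hn) (sub_choose_macaulayTop_lt hd hn)
  rw [Nat.sub_add_cancel hd] at hrem
  have := Nat.choose_le_choose (d + 1) (show macaulayTop n d + 1 ≤ k from hK)
  rw [macaulayBound_eq hn]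
  omega

def monomialsBelow (m d : ℕ) : Finset (Multiset ℕ) :=
  (Finset.univ : Finset (Sym (Fin m) d)).image fun s => s.1.map Fin.val

/-- The first `n` monomials of degree `d` in colex order: with `K = macaulayTop n d`, all monomials
in the variables below `K + 1 - d`, then `x_(K+1-d)` times the first `n - C(K, d)` monomials of
degree `d - 1`. -/
def colexSegment : ℕ → ℕ → Finset (Multiset ℕ)
  | 0, _ => ∅
  | _ + 1, 0 => {0}
  | n + 1, d + 1 =>
      monomialsBelow (macaulayTop (n + 1) (d + 1) - d) (d + 1) ∪
        (colexSegment (n + 1 - (macaulayTop (n + 1) (d + 1)).choose (d + 1)) d).image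
          ((macaulayTop (n + 1) (d + 1) - d) ::ₘ ·)
  termination_by n => n
  decreasing_by exact sub_choose_macaulayTop_lt_self (by omega)

section ColexSegment

variable {m n n' d a : ℕ} {s t : Multiset ℕ}

theorem mem_monomialsBelow : t ∈ monomialsBelow m d ↔ card t = d ∧ ∀ a ∈ t, a < m := by
  constructor
  · rintro hs
    obtain ⟨s, -, rfl⟩ := Finset.mem_image.1 hs
    refine ⟨by rw [card_map, s.2], fun a ha => ?_⟩
    obtain ⟨b, -, rfl⟩ := mem_map.1 ha
    exact b.2
  · rintro ⟨hcard, hlt⟩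
    refine Finset.mem_image.2
      ⟨⟨t.pmap (fun a h => (⟨a, h⟩ : Fin m)) hlt, by simpa using hcard⟩, Finset.mem_univ _, ?_⟩
    simp [map_pmap, pmap_eq_map]

theorem card_monomialsBelow : (monomialsBelow m d).card = (m + d - 1).choose d := by
  rw [monomialsBelow, Finset.card_image_of_injective, Finset.card_univ, Sym.card_sym_eq_choose,
    Fintype.card_fin]
  exact fun s t hst => Subtype.ext (map_injective Fin.val_injective hst)

@[simp]
theorem colexSegment_zero_left (d : ℕ) : colexSegment 0 d = ∅ := by
  rw [colexSegment]

theorem colexSegment_zero_right (hn : 1 ≤ n) : colexSegment n 0 = {0} := by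
  obtain ⟨n, rfl⟩ := Nat.exists_eq_add_of_le' hn
  rw [colexSegment]

theorem colexSegment_eq (hn : 1 ≤ n) (hd : 1 ≤ d) : colexSegment n d =
    monomialsBelow (macaulayTop n d + 1 - d) d ∪
      (colexSegment (n - (macaulayTop n d).choose d) (d - 1)).image
        ((macaulayTop n d + 1 - d) ::ₘ ·) := by
  obtain ⟨n, rfl⟩ := Nat.exists_eq_add_of_le' hn
  obtain ⟨d, rfl⟩ := Nat.exists_eq_add_of_le' hd
  rw [colexSegment, Nat.add_sub_cancel, show macaulayTop (n + 1) (d + 1) + 1 - (d + 1) =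
    macaulayTop (n + 1) (d + 1) - d by omega]

theorem one_le_of_mem_colexSegment (hs : s ∈ colexSegment n d) : 1 ≤ n := by
  by_contra! h
  simp [Nat.lt_one_iff.mp h] at hs

theorem card_of_mem_colexSegment (hs : s ∈ colexSegment n d) : card s = d := by
  induction n using Nat.strong_induction_on generalizing d s with | _ n ih =>
  have hn := one_le_of_mem_colexSegment hs
  rcases Nat.eq_zero_or_pos d with rfl | hd
  · simp_all [colexSegment_zero_right hn]
  rw [colexSegment_eq hn hd, Finset.mem_union, Finset.mem_image] at hs
  rcases hs with hs | ⟨y, hy, rfl⟩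
  · exact (mem_monomialsBelow.1 hs).1
  · rw [card_cons, ih _ (sub_choose_macaulayTop_lt_self hn) hy]
    omega

theorem le_of_mem_colexSegment (hs : s ∈ colexSegment n d) (ha : a ∈ s) :
    a ≤ macaulayTop n d + 1 - d := by
  induction n using Nat.strong_induction_on generalizing d s with | _ n ih =>
  have hn := one_le_of_mem_colexSegment hs
  rcases Nat.eq_zero_or_pos d with rfl | hd
  · simp_all [colexSegment_zero_right hn]
  rw [colexSegment_eq hn hd, Finset.mem_union, Finset.mem_image] at hs
  rcases hs with hs | ⟨y, hy, rfl⟩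
  · exact ((mem_monomialsBelow.1 hs).2 a ha).le
  rcases mem_cons.1 ha with rfl | ha
  · rfl
  have hrem := one_le_of_mem_colexSegment hy
  have := ih _ (sub_choose_macaulayTop_lt_self hn) hy ha
  have := macaulayTop_lt hrem (sub_choose_macaulayTop_lt hd hn)
  omega

theorem card_colexSegment (hd : 1 ≤ d) : (colexSegment n d).card = n := by
  induction n using Nat.strong_induction_on generalizing d with | _ n ih =>
  rcases Nat.eq_zero_or_pos n with rfl | hn
  · simp
  have hdisj : Disjoint (monomialsBelow (macaulayTop n d + 1 - d) d)
      ((colexSegment (n - (macaulayTop n d).choose d) (d - 1)).image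
        ((macaulayTop n d + 1 - d) ::ₘ ·)) := by
    refine Finset.disjoint_left.2 fun t ht ht' => ?_
    obtain ⟨y, -, rfl⟩ := Finset.mem_image.1 ht'
    exact lt_irrefl _ ((mem_monomialsBelow.1 ht).2 _ (mem_cons_self _ y))
  have hrem : (colexSegment (n - (macaulayTop n d).choose d) (d - 1)).card =
      n - (macaulayTop n d).choose d := by
    rcases Nat.eq_zero_or_pos (n - (macaulayTop n d).choose d) with h0 | hpos
    · simp [h0]
    exact ih _ (sub_choose_macaulayTop_lt_self hn)
      (one_le_of_lt_choose hpos (sub_choose_macaulayTop_lt hd hn))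
  have := le_macaulayTop (d := d) hn
  have := choose_macaulayTop_le (d := d) hn
  rw [colexSegment_eq hn hd, Finset.card_union_of_disjoint hdisj, card_monomialsBelow,
    Finset.card_image_of_injective _ fun _ _ => (cons_inj_right _).1, hrem,
    show macaulayTop n d + 1 - d + d - 1 = macaulayTop n d by omega]
  omega

theorem mem_colexSegment_of_lt (hn : 1 ≤ n) (ht : card t = d)
    (hlt : ∀ a ∈ t, a < macaulayTop n d + 1 - d) : t ∈ colexSegment n d := by
  rcases Nat.eq_zero_or_pos d with rfl | hd
  · simp_all [colexSegment_zero_right hn]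
  rw [colexSegment_eq hn hd]
  exact Finset.mem_union_left _ (mem_monomialsBelow.2 ⟨ht, hlt⟩)

theorem colexSegment_mono (h : n ≤ n') : colexSegment n d ⊆ colexSegment n' d := by
  induction n' using Nat.strong_induction_on generalizing n d with | _ n' ih =>
  intro s hs
  have hn := one_le_of_mem_colexSegment hs
  have hd := le_macaulayTop (d := d) hn
  rcases (macaulayTop_mono (d := d) h).lt_or_eq with hlt | heq
  · exact mem_colexSegment_of_lt (by omega) (card_of_mem_colexSegment hs)
      fun a ha => (le_of_mem_colexSegment hs ha).trans_lt (by omega)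
  rcases Nat.eq_zero_or_pos d with rfl | hd
  · rwa [colexSegment_zero_right (by omega)] at hs ⊢
  have := choose_macaulayTop_le (d := d) hn
  rw [colexSegment_eq hn hd] at hs
  rw [colexSegment_eq (by omega) hd, ← heq]
  refine Finset.union_subset_union le_rfl (Finset.image_subset_image ?_) hs
  exact ih _ (by rw [heq]; exact sub_choose_macaulayTop_lt_self (by omega)) (by omega)

/-- Colex segments attain Macaulay's bound. -/
theorem mem_colexSegment_of_cons_mem (hm : m ≤ macaulayBound n d)
    (hs : a ::ₘ t ∈ colexSegment m (d + 1)) : t ∈ colexSegment n d := by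
  induction n using Nat.strong_induction_on generalizing m d a t with | _ n ih =>
  have hm0 := one_le_of_mem_colexSegment hs
  have hn : 1 ≤ n := by
    by_contra! h
    rw [Nat.lt_one_iff.mp h, macaulayBound_zero] at hm
    omega
  have ht : card t = d := by simpa using card_of_mem_colexSegment hs
  rcases Nat.eq_zero_or_pos d with rfl | hd
  · simp_all [colexSegment_zero_right hn]
  have hKd := le_macaulayTop (d := d) hn
  have hKm := le_macaulayTop (d := d + 1) hm0
  have hsub := sub_choose_macaulayTop_lt hd hn
  have htop : macaulayTop m (d + 1) < macaulayTop n d + 2 := macaulayTop_lt hm0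
    (hm.trans_lt (macaulayBound_lt_choose_succ (lt_choose_macaulayTop_succ hd hn)))
  -- either `t` only involves variables below `macaulayTop n d + 1 - d`, or `a ::ₘ t` lies in the
  -- second part of `colexSegment m (d + 1)`, whose top variable is that of `colexSegment n d`
  rcases Nat.lt_succ_iff.1 htop |>.lt_or_eq with hlt | heq
  · exact mem_colexSegment_of_lt hn ht fun b hb =>
      (le_of_mem_colexSegment hs (mem_cons_of_mem hb)).trans_lt (by omega)
  rw [colexSegment_eq hm0 (by omega), heq, Finset.mem_union, Finset.mem_image,
    show macaulayTop n d + 1 + 1 - (d + 1) = macaulayTop n d + 1 - d by omega] at hs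
  rcases hs with hs | ⟨y, hy, hcons⟩
  · exact mem_colexSegment_of_lt hn ht fun b hb =>
      (mem_monomialsBelow.1 hs).2 b (mem_cons_of_mem hb)
  have hrem : m - (macaulayTop n d + 1).choose (d + 1) ≤
      macaulayBound (n - (macaulayTop n d).choose d) (d - 1) := by
    rw [macaulayBound_eq hn] at hm
    omega
  rcases cons_eq_cons.1 hcons with ⟨-, rfl⟩ | ⟨-, cs, rfl, rfl⟩
  · refine colexSegment_mono ?_ (by simpa using hy)
    have := macaulayBound_le_choose_add hsub
    rw [Nat.sub_add_cancel hd] at this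
    have := choose_macaulayTop_le (d := d) hn
    omega
  · rw [colexSegment_eq hn hd]
    refine Finset.mem_union_right _ (Finset.mem_image_of_mem _ (ih _ ?_ hrem (a := a) ?_))
    · exact sub_choose_macaulayTop_lt_self hn
    · simpa [Nat.sub_add_cancel hd] using hy

end ColexSegment

def segmentFamily (g : ℕ → ℕ) (e : ℕ) : Finset (Multiset ℕ) :=
  (Finset.range (e + 1)).biUnion fun j => colexSegment (g j) j

section SegmentFamily

variable {g : ℕ → ℕ} {e a : ℕ} {s t : Multiset ℕ}

theorem mem_segmentFamily :
    s ∈ segmentFamily g e ↔ card s ≤ e ∧ s ∈ colexSegment (g (card s)) (card s) := by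
  simp only [segmentFamily, Finset.mem_biUnion, Finset.mem_range]
  constructor
  · rintro ⟨j, hj, hs⟩
    obtain rfl := card_of_mem_colexSegment hs
    exact ⟨by omega, hs⟩
  · rintro ⟨he, hs⟩
    exact ⟨_, by omega, hs⟩

theorem zero_mem_segmentFamily (hg0 : g 0 = 1) : 0 ∈ segmentFamily g e := by
  simp [mem_segmentFamily, hg0, colexSegment_zero_right]

theorem mem_segmentFamily_of_cons_mem (hg0 : g 0 = 1) (hg : SatisfiesMacaulay g e)
    (hs : a ::ₘ t ∈ segmentFamily g e) : t ∈ segmentFamily g e := by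
  rw [mem_segmentFamily, card_cons] at hs
  rcases Nat.eq_zero_or_pos (card t) with h0 | hpos
  · rw [card_eq_zero.1 h0]
    exact zero_mem_segmentFamily hg0
  · exact mem_segmentFamily.2 ⟨by omega, mem_colexSegment_of_cons_mem (hg _ hpos hs.1) hs.2⟩

theorem segmentFamily_downward (hg0 : g 0 = 1) (hg : SatisfiesMacaulay g e)
    (hs : s ∈ segmentFamily g e) (hts : t ≤ s) : t ∈ segmentFamily g e := by
  obtain ⟨u, rfl⟩ := Multiset.le_iff_exists_add.1 hts
  clear hts
  induction u using Multiset.induction with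
  | empty => simpa using hs
  | cons a u ih => exact ih (mem_segmentFamily_of_cons_mem hg0 hg (by rwa [← add_cons]))

theorem card_filter_segmentFamily (hg0 : g 0 = 1) {j : ℕ} (hj : j ≤ e) :
    ((segmentFamily g e).filter (card · = j)).card = g j := by
  have : (segmentFamily g e).filter (card · = j) = colexSegment (g j) j := by
    ext s
    rw [Finset.mem_filter, mem_segmentFamily]
    constructor
    · rintro ⟨⟨-, hs⟩, rfl⟩
      exact hs
    · intro hs
      obtain rfl := card_of_mem_colexSegment hs
      exact ⟨⟨hj, hs⟩, rfl⟩
  rw [this]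
  rcases Nat.eq_zero_or_pos j with rfl | hj
  · simp [hg0, colexSegment_zero_right]
  · exact card_colexSegment hj

end SegmentFamily

section TruncatedCone

variable {F : Finset (Multiset ℕ)} {v e k : ℕ} {s t y : Multiset ℕ}

theorem filter_ne_replicate_add (hv : v ∉ y) : (replicate k v + y).filter (· ≠ v) = y := by
  rw [filter_add, filter_eq_nil.2 fun a ha => by simp [eq_of_mem_replicate ha], zero_add,
    filter_eq_self.2 fun a ha => ne_of_mem_of_not_mem ha hv]

theorem replicate_count_add_filter_ne (v : ℕ) (s : Multiset ℕ) :
    replicate (count v s) v + s.filter (· ≠ v) = s := by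
  rw [← filter_eq', filter_add_not]

def truncatedCone (F : Finset (Multiset ℕ)) (v e : ℕ) : Finset (Multiset ℕ) :=
  ((Finset.range (e + 1) ×ˢ F).image fun p => replicate p.1 v + p.2).filter (card · ≤ e)

theorem mem_truncatedCone (hv : ∀ y ∈ F, v ∉ y) :
    s ∈ truncatedCone F v e ↔ card s ≤ e ∧ s.filter (· ≠ v) ∈ F := by
  simp only [truncatedCone, Finset.mem_filter, Finset.mem_image, Finset.mem_product,
    Finset.mem_range, Prod.exists]
  constructor
  · rintro ⟨⟨k, y, ⟨-, hy⟩, rfl⟩, he⟩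
    rw [filter_ne_replicate_add (hv y hy)]
    exact ⟨he, hy⟩
  · rintro ⟨he, hs⟩
    exact ⟨⟨count v s, _, ⟨by have := count_le_card v s; omega, hs⟩,
      replicate_count_add_filter_ne v s⟩, he⟩

theorem truncatedCone_downward (hv : ∀ y ∈ F, v ∉ y) (hF : ∀ s ∈ F, ∀ t ≤ s, t ∈ F)
    (hs : s ∈ truncatedCone F v e) (hts : t ≤ s) : t ∈ truncatedCone F v e := by
  rw [mem_truncatedCone hv] at hs ⊢
  exact ⟨(card_le_card hts).trans hs.1, hF _ hs.2 _ (filter_le_filter _ hts)⟩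

theorem cons_mem_truncatedCone (hv : ∀ y ∈ F, v ∉ y) (hs : s ∈ truncatedCone F v e)
    (he : card s < e) : v ::ₘ s ∈ truncatedCone F v e := by
  rw [mem_truncatedCone hv] at hs ⊢
  rw [card_cons, filter_cons_of_neg _ (by simp)]
  exact ⟨he, hs.2⟩

theorem replicate_mem_truncatedCone (hv : ∀ y ∈ F, v ∉ y) (h0 : 0 ∈ F) :
    replicate e v ∈ truncatedCone F v e := by
  have := filter_ne_replicate_add (k := e) (notMem_zero v)
  rw [add_zero] at this
  rw [mem_truncatedCone hv, card_replicate, this]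
  exact ⟨le_rfl, h0⟩

theorem card_filter_truncatedCone (hv : ∀ y ∈ F, v ∉ y) {i : ℕ} (hi : i ≤ e) :
    ((truncatedCone F v e).filter (card · = i)).card =
      ∑ j ∈ Finset.range (i + 1), (F.filter (card · = j)).card := by
  have himage : (truncatedCone F v e).filter (card · = i) =
      (F.filter (card · ≤ i)).image fun y => replicate (i - card y) v + y := by
    ext s
    simp only [Finset.mem_filter, Finset.mem_image, mem_truncatedCone hv]
    constructor
    · rintro ⟨⟨-, hs⟩, rfl⟩
      refine ⟨_, ⟨hs, card_le_card (filter_le _ s)⟩, ?_⟩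
      have hcard := congrArg card (replicate_count_add_filter_ne v s)
      rw [card_add, card_replicate] at hcard
      conv_rhs => rw [← replicate_count_add_filter_ne v s]
      rw [← hcard, Nat.add_sub_cancel]
    · rintro ⟨y, ⟨hy, hyi⟩, rfl⟩
      rw [filter_ne_replicate_add (hv y hy), card_add, card_replicate]
      exact ⟨⟨by omega, hy⟩, by omega⟩
  rw [himage, Finset.card_image_of_injOn, Finset.card_eq_sum_card_fiberwise (f := card)
    (t := Finset.range (i + 1))]
  · refine Finset.sum_congr rfl fun j hj => ?_
    rw [Finset.filter_filter]
    congr 1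
    rw [Finset.mem_range] at hj
    exact Finset.filter_congr fun y _ => by omega
  · exact fun y hy => Finset.mem_range.2 (Nat.lt_succ_of_le (Finset.mem_filter.1 hy).2)
  · intro y hy z hz hyz
    simpa [filter_ne_replicate_add (hv y (Finset.mem_filter.1 hy).1),
      filter_ne_replicate_add (hv z (Finset.mem_filter.1 hz).1)] using congrArg (filter (· ≠ v)) hyz

end TruncatedCone

def freshVar (X : Finset (Multiset ℕ)) : ℕ := X.sup Multiset.sup + 1

theorem lt_freshVar {X : Finset (Multiset ℕ)} {s : Multiset ℕ} {a : ℕ} (hs : s ∈ X)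
    (ha : a ∈ s) : a < freshVar X :=
  Nat.lt_succ_of_le ((Multiset.le_sup ha).trans (Finset.le_sup (f := Multiset.sup) hs))

section ExpVec

variable {r : ℕ} {s t : Multiset ℕ}

def expVec (r : ℕ) (s : Multiset ℕ) : Fin r → ℕ := fun j => s.count (j : ℕ)

def ofExpVec (N : Fin r → ℕ) : Multiset ℕ := ∑ j, replicate (N j) (j : ℕ)

theorem count_ofExpVec (N : Fin r → ℕ) (a : ℕ) :
    count a (ofExpVec N) = if h : a < r then N ⟨a, h⟩ else 0 := by
  rw [ofExpVec, count_sum']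
  split_ifs with h
  · rw [Finset.sum_eq_single (⟨a, h⟩ : Fin r) (fun b _ hb => ?_) (by simp)]
    · simp
    · rw [count_replicate, if_neg fun hab => hb (Fin.ext hab)]
  · exact Finset.sum_eq_zero fun b _ => by rw [count_replicate, if_neg (by omega)]

theorem expVec_ofExpVec (N : Fin r → ℕ) : expVec r (ofExpVec N) = N := by
  funext j
  simp [expVec, count_ofExpVec]

theorem ofExpVec_expVec (hs : ∀ a ∈ s, a < r) : ofExpVec (expVec r s) = s := by
  ext a
  rw [count_ofExpVec]
  split_ifs with h
  · rfl
  · exact (count_eq_zero.2 fun ha => h (hs a ha)).symm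

theorem ofExpVec_mono {N M : Fin r → ℕ} (h : N ≤ M) : ofExpVec N ≤ ofExpVec M := by
  refine Multiset.le_iff_count.2 fun a => ?_
  rw [count_ofExpVec, count_ofExpVec]
  split_ifs
  · exact h _
  · rfl

theorem monDeg_expVec (hs : ∀ a ∈ s, a < r) : monDeg (expVec r s) = card s := by
  conv_rhs => rw [← ofExpVec_expVec hs]
  simp [monDeg, ofExpVec]

end ExpVec

theorem isPureOSeq_of_multisets {h : ℕ → ℕ} {e : ℕ} (X : Finset (Multiset ℕ))
    (hdown : ∀ s ∈ X, ∀ t ≤ s, t ∈ X) (hdeg : ∀ s ∈ X, card s ≤ e)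
    (htop : ∃ s ∈ X, card s = e) (hext : ∀ s ∈ X, card s < e → ∃ t ∈ X, s < t)
    (hh : ∀ i ≤ e, h i = (X.filter (card · = i)).card) : IsPureOSeq h e := by
  set r := freshVar X
  have hr : ∀ s ∈ X, ∀ a ∈ s, a < r := fun s hs a ha => lt_freshVar hs ha
  have hdeg' : ∀ s ∈ X, monDeg (expVec r s) = card s := fun s hs => monDeg_expVec (hr s hs)
  have hinj : Set.InjOn (expVec r) X := fun s hs t ht hst => by
    rw [← ofExpVec_expVec (hr s hs), ← ofExpVec_expVec (hr t ht), hst]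
  obtain ⟨s₀, hs₀, hs₀e⟩ := htop
  refine ⟨r, X.image (expVec r),
    ⟨⟨⟨_, Finset.mem_image_of_mem _ hs₀⟩, ?_⟩, ?_, ?_, ?_⟩, ?_⟩
  · rintro _ hM N hNM
    obtain ⟨s, hs, rfl⟩ := Finset.mem_image.1 hM
    have hN : ofExpVec N ∈ X := hdown s hs _ (ofExpVec_expVec (hr s hs) ▸ ofExpVec_mono hNM)
    exact Finset.mem_image.2 ⟨_, hN, expVec_ofExpVec N⟩
  · rintro _ hM
    obtain ⟨s, hs, rfl⟩ := Finset.mem_image.1 hM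
    exact (hdeg' s hs).trans_le (hdeg s hs)
  · exact ⟨_, Finset.mem_image_of_mem _ hs₀, (hdeg' _ hs₀).trans hs₀e⟩
  · rintro _ ⟨hM, hmax⟩
    obtain ⟨s, hs, rfl⟩ := Finset.mem_image.1 hM
    rw [hdeg' s hs]
    by_contra hne
    obtain ⟨t, ht, hst⟩ := hext s hs ((hdeg s hs).lt_of_ne hne)
    have := hmax _ (Finset.mem_image_of_mem _ ht) fun j => count_le_of_le _ hst.le
    exact hst.ne (hinj hs ht this.symm)
  · intro i hi
    rw [hh i hi, Finset.filter_image,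
      Finset.card_image_of_injOn (hinj.mono (Finset.filter_subset _ _))]
    congr 1
    exact Finset.filter_congr fun s hs => by rw [hdeg' s hs]

theorem sum_range_firstDifference {h : ℕ → ℕ} {i : ℕ} (h0 : h 0 = 1)
    (hmono : ∀ j, 1 ≤ j → j ≤ i → h (j - 1) ≤ h j) :
    ∑ j ∈ Finset.range (i + 1), (if j = 0 then 1 else h j - h (j - 1)) = h i := by
  induction i with
  | zero => simp [h0]
  | succ i ih =>
    rw [Finset.sum_range_succ, ih fun j hj hji => hmono j hj (by omega), if_neg (by omega)]
    have := hmono (i + 1) (by omega) le_rfl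
    simp only [Nat.add_sub_cancel] at this ⊢
    omega

end PureOSeq

open PureOSeq Multiset in
theorem differentiable_OSeq_is_pure_general (h : ℕ → ℕ) (e : ℕ)
    (hdiff : IsDifferentiable h e) :
    IsPureOSeq h e := by
  obtain ⟨h0, hmono, hmac⟩ := hdiff
  set g : ℕ → ℕ := fun i => if i = 0 then 1 else h i - h (i - 1)
  set F := segmentFamily g e
  have hF : ∀ s ∈ F, ∀ t ≤ s, t ∈ F := fun s hs t => segmentFamily_downward rfl hmac hs
  have hv : ∀ y ∈ F, freshVar F ∉ y := fun y hy hvy => lt_irrefl _ (lt_freshVar hy hvy)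
  refine isPureOSeq_of_multisets (truncatedCone F (freshVar F) e)
    (fun s hs t => truncatedCone_downward hv hF hs)
    (fun s hs => ((mem_truncatedCone hv).1 hs).1)
    ⟨_, replicate_mem_truncatedCone hv (zero_mem_segmentFamily rfl), card_replicate _ _⟩
    (fun s hs he => ⟨_, cons_mem_truncatedCone hv hs he, lt_cons_self s _⟩) fun i hi => ?_
  rw [card_filter_truncatedCone hv hi, Finset.sum_congr rfl fun j hj =>
    card_filter_segmentFamily rfl ((Nat.lt_succ_iff.1 (Finset.mem_range.1 hj)).trans hi)]
  exact (sum_range_firstDifference h0 fun j hj hji => hmono j hj (hji.trans hi)).symm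

/-- Every finite differentiable O-sequence `(h 0 = 1, h 1, …, h e)`
of positive integers is a pure O-sequence. -/
theorem differentiable_OSeq_is_pure (h : ℕ → ℕ) (e : ℕ)
    (hO : IsOSeq h e) (hdiff : IsDifferentiable h e) :
    IsPureOSeq h e :=
  differentiable_OSeq_is_pure_general h e hdiff
end

section
/- For every integer e ≥ 4 there exists a pure O-sequence (h_0, h_1, …, h_e) of socle degree e that is non-decreasing (h_0 ≤ h_1 ≤ ⋯ ≤ h_e) but not differentiable. -/
namespace NonDiffAux

open Finset

lemma monDeg_eq_zero {r : ℕ} {M : Fin r → ℕ} (h : monDeg M = 0) : M = fun _ => 0 := by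
  funext j
  have := Finset.sum_eq_zero_iff.mp h j (Finset.mem_univ j)
  simpa using this

lemma zero_mem {r : ℕ} {X : Finset (Fin r → ℕ)} (h : IsOrderIdeal X) : (fun _ => 0) ∈ X := by
  obtain ⟨⟨M, hM⟩, hid⟩ := h
  exact hid M hM _ (fun j => Nat.zero_le _)

lemma monDeg_zero_fun {r : ℕ} : monDeg (fun _ : Fin r => 0) = 0 := by
  simp [monDeg]

lemma pure_transport {h h' : ℕ → ℕ} {e : ℕ} (H : IsPureOSeq h e)
    (hh : ∀ i ≤ e, h' i = h i) : IsPureOSeq h' e := by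
  obtain ⟨r, X, hX, hv⟩ := H
  exact ⟨r, X, hX, fun i hi => (hh i hi).trans (hv i hi)⟩

lemma filter_deg_zero {r : ℕ} {X : Finset (Fin r → ℕ)} (h : IsOrderIdeal X) :
    (X.filter fun M => monDeg M = 0) = {fun _ => 0} := by
  ext M
  simp only [Finset.mem_filter, Finset.mem_singleton]
  constructor
  · rintro ⟨-, h0⟩; exact monDeg_eq_zero h0
  · rintro rfl; exact ⟨zero_mem h, monDeg_zero_fun⟩

lemma pure_h0 {h : ℕ → ℕ} {e : ℕ} (H : IsPureOSeq h e) : h 0 = 1 := by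
  obtain ⟨r, X, hX, hv⟩ := H
  rw [hv 0 (Nat.zero_le _), filter_deg_zero hX.1, Finset.card_singleton]

end NonDiffAux
namespace NonDiffAux

open Finset

section Join

variable {r₁ r₂ : ℕ}

lemma monDeg_append_left (M : Fin r₁ → ℕ) :
    monDeg (Fin.append M (fun _ : Fin r₂ => 0)) = monDeg M := by
  unfold monDeg
  rw [Fin.sum_univ_add]
  simp

lemma monDeg_append_right (M : Fin r₂ → ℕ) :
    monDeg (Fin.append (fun _ : Fin r₁ => 0) M) = monDeg M := by
  unfold monDeg
  rw [Fin.sum_univ_add]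
  simp

lemma append_left_injective :
    Function.Injective (fun M : Fin r₁ → ℕ => Fin.append M (fun _ : Fin r₂ => 0)) := by
  intro a b hab
  funext j
  have := congrFun hab (Fin.castAdd r₂ j)
  simpa using this

lemma append_right_injective :
    Function.Injective (fun M : Fin r₂ → ℕ => Fin.append (fun _ : Fin r₁ => 0) M) := by
  intro a b hab
  funext j
  have := congrFun hab (Fin.natAdd r₁ j)
  simpa using this

lemma le_append_left {M : Fin r₁ → ℕ} {N : Fin (r₁ + r₂) → ℕ}
    (hN : ∀ j, N j ≤ Fin.append M (fun _ : Fin r₂ => 0) j) :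
    N = Fin.append (fun j => N (Fin.castAdd r₂ j)) (fun _ : Fin r₂ => 0) := by
  funext j
  refine Fin.addCases (fun j => ?_) (fun j => ?_) j
  · rw [Fin.append_left]
  · rw [Fin.append_right]
    have := hN (Fin.natAdd r₁ j)
    rw [Fin.append_right] at this
    omega

lemma le_append_right {M : Fin r₂ → ℕ} {N : Fin (r₁ + r₂) → ℕ}
    (hN : ∀ j, N j ≤ Fin.append (fun _ : Fin r₁ => 0) M j) :
    N = Fin.append (fun _ : Fin r₁ => 0) (fun j => N (Fin.natAdd r₁ j)) := by
  funext j
  refine Fin.addCases (fun j => ?_) (fun j => ?_) j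
  · rw [Fin.append_left]
    have := hN (Fin.castAdd r₂ j)
    rw [Fin.append_left] at this
    omega
  · rw [Fin.append_right]

lemma append_le_append_left {M N : Fin r₁ → ℕ} (h : ∀ j, M j ≤ N j) :
    ∀ j, Fin.append M (fun _ : Fin r₂ => 0) j ≤ Fin.append N (fun _ : Fin r₂ => 0) j := by
  intro j
  refine Fin.addCases (fun j => ?_) (fun j => ?_) j
  · rw [Fin.append_left, Fin.append_left]; exact h j
  · simp

lemma append_le_append_right {M N : Fin r₂ → ℕ} (h : ∀ j, M j ≤ N j) :
    ∀ j, Fin.append (fun _ : Fin r₁ => 0) M j ≤ Fin.append (fun _ : Fin r₁ => 0) N j := by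
  intro j
  refine Fin.addCases (fun j => ?_) (fun j => ?_) j
  · simp
  · rw [Fin.append_right, Fin.append_right]; exact h j

lemma pure_join {e : ℕ} {h₁ h₂ : ℕ → ℕ} (H₁ : IsPureOSeq h₁ e) (H₂ : IsPureOSeq h₂ e) :
    IsPureOSeq (fun i => if i = 0 then 1 else h₁ i + h₂ i) e := by
  obtain ⟨r₁, X₁, hP₁, hv₁⟩ := H₁
  obtain ⟨r₂, X₂, hP₂, hv₂⟩ := H₂
  obtain ⟨⟨hne₁, hid₁⟩, hle₁, hex₁, hmax₁⟩ := hP₁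
  obtain ⟨⟨hne₂, hid₂⟩, hle₂, hex₂, hmax₂⟩ := hP₂
  set f₁ : (Fin r₁ → ℕ) → (Fin (r₁ + r₂) → ℕ) :=
    fun M => Fin.append M (fun _ : Fin r₂ => 0) with hf₁
  set f₂ : (Fin r₂ → ℕ) → (Fin (r₁ + r₂) → ℕ) :=
    fun M => Fin.append (fun _ : Fin r₁ => 0) M with hf₂
  set X : Finset (Fin (r₁ + r₂) → ℕ) := X₁.image f₁ ∪ X₂.image f₂ with hX
  have hidX : IsOrderIdeal X := by
    constructor
    · obtain ⟨M, hM⟩ := hne₁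
      exact ⟨f₁ M, Finset.mem_union_left _ (Finset.mem_image_of_mem _ hM)⟩
    · intro M hM N hN
      rcases Finset.mem_union.mp hM with hM | hM
      · obtain ⟨M₁, hM₁, rfl⟩ := Finset.mem_image.mp hM
        have hmem : (fun j => N (Fin.castAdd r₂ j)) ∈ X₁ := by
          refine hid₁ M₁ hM₁ _ (fun j => ?_)
          have := hN (Fin.castAdd r₂ j)
          simpa [hf₁, hf₂] using this
        refine Finset.mem_union_left _ (Finset.mem_image.mpr ⟨_, hmem, ?_⟩)
        exact (le_append_left hN).symm
      · obtain ⟨M₂, hM₂, rfl⟩ := Finset.mem_image.mp hM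
        have hmem : (fun j => N (Fin.natAdd r₁ j)) ∈ X₂ := by
          refine hid₂ M₂ hM₂ _ (fun j => ?_)
          have := hN (Fin.natAdd r₁ j)
          simpa [hf₁, hf₂] using this
        refine Finset.mem_union_right _ (Finset.mem_image.mpr ⟨_, hmem, ?_⟩)
        exact (le_append_right hN).symm
  refine ⟨r₁ + r₂, X, ⟨hidX, ?_, ?_, ?_⟩, ?_⟩
  · intro M hM
    rcases Finset.mem_union.mp hM with hM | hM
    · obtain ⟨M₁, hM₁, rfl⟩ := Finset.mem_image.mp hM
      rw [hf₁]; rw [monDeg_append_left]; exact hle₁ M₁ hM₁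
    · obtain ⟨M₂, hM₂, rfl⟩ := Finset.mem_image.mp hM
      rw [hf₂]; rw [monDeg_append_right]; exact hle₂ M₂ hM₂
  · obtain ⟨M, hM, hdeg⟩ := hex₁
    exact ⟨f₁ M, Finset.mem_union_left _ (Finset.mem_image_of_mem _ hM),
      by rw [hf₁, monDeg_append_left]; exact hdeg⟩
  · rintro M ⟨hM, hmax⟩
    rcases Finset.mem_union.mp hM with hM | hM
    · obtain ⟨M₁, hM₁, rfl⟩ := Finset.mem_image.mp hM
      have : IsMaxMon X₁ M₁ := by
        refine ⟨hM₁, fun N₁ hN₁ hle => ?_⟩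
        have h2 : f₁ N₁ = f₁ M₁ := by
          refine hmax (f₁ N₁) (Finset.mem_union_left _ (Finset.mem_image_of_mem _ hN₁)) ?_
          exact append_le_append_left hle
        exact append_left_injective h2
      rw [hf₁, monDeg_append_left]; exact hmax₁ M₁ this
    · obtain ⟨M₂, hM₂, rfl⟩ := Finset.mem_image.mp hM
      have : IsMaxMon X₂ M₂ := by
        refine ⟨hM₂, fun N₂ hN₂ hle => ?_⟩
        have h2 : f₂ N₂ = f₂ M₂ := by
          refine hmax (f₂ N₂) (Finset.mem_union_right _ (Finset.mem_image_of_mem _ hN₂)) ?_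
          exact append_le_append_right hle
        exact append_right_injective h2
      rw [hf₂, monDeg_append_right]; exact hmax₂ M₂ this
  · intro i hi
    by_cases h0 : i = 0
    · subst h0
      rw [filter_deg_zero hidX, Finset.card_singleton]
      simp
    · simp only [if_neg h0]
      rw [Finset.filter_union]
      rw [Finset.card_union_of_disjoint]
      · congr 1
        · rw [Finset.filter_image]
          have : (X₁.filter fun M₁ => monDeg (f₁ M₁) = i) = X₁.filter fun M₁ => monDeg M₁ = i := by
            apply Finset.filter_congr
            intro M₁ _
            rw [hf₁, monDeg_append_left]
          rw [this, Finset.card_image_of_injective _ append_left_injective]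
          exact hv₁ i hi
        · rw [Finset.filter_image]
          have : (X₂.filter fun M₂ => monDeg (f₂ M₂) = i) = X₂.filter fun M₂ => monDeg M₂ = i := by
            apply Finset.filter_congr
            intro M₂ _
            rw [hf₂, monDeg_append_right]
          rw [this, Finset.card_image_of_injective _ append_right_injective]
          exact hv₂ i hi
      · rw [Finset.disjoint_left]
        rintro M hMa hMb
        have hdeg : monDeg M = i := (Finset.mem_filter.mp hMa).2
        obtain ⟨M₁, _, hM1⟩ := Finset.mem_image.mp (Finset.mem_filter.mp hMa).1
        obtain ⟨M₂, _, hM2⟩ := Finset.mem_image.mp (Finset.mem_filter.mp hMb).1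
        have hzero : M = fun _ => 0 := by
          funext j
          refine Fin.addCases (fun j => ?_) (fun j => ?_) j
          · have := congrFun hM2 (Fin.castAdd r₂ j)
            simpa [hf₁, hf₂] using this.symm
          · have := congrFun hM1 (Fin.natAdd r₁ j)
            simpa [hf₁, hf₂] using this.symm
        rw [hzero, monDeg_zero_fun] at hdeg
        exact h0 hdeg.symm

end Join

end NonDiffAux
namespace NonDiffAux

open Finset

lemma pure_joinMul {e : ℕ} {h hB : ℕ → ℕ} (H : IsPureOSeq h e) (HB : IsPureOSeq hB e) :
    ∀ t : ℕ, IsPureOSeq (fun i => if i = 0 then 1 else h i + t * hB i) e := by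
  intro t
  induction t with
  | zero =>
      refine pure_transport H (fun i hi => ?_)
      by_cases h0 : i = 0
      · subst h0; simp [pure_h0 H]
      · simp [h0]
  | succ t ih =>
      refine pure_transport (pure_join ih HB) (fun i hi => ?_)
      by_cases h0 : i = 0
      · simp [h0]
      · simp only [if_neg h0]
        ring

/-- monDeg of an `update` that increments one coordinate. -/
lemma monDeg_update_succ {r : ℕ} (M : Fin r → ℕ) (j0 : Fin r) :
    monDeg (Function.update M j0 (M j0 + 1)) = monDeg M + 1 := by
  unfold monDeg
  rw [Finset.sum_update_of_mem (Finset.mem_univ j0),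
    Finset.sum_eq_add_sum_sdiff_singleton_of_mem (Finset.mem_univ j0) M]
  omega

lemma le_update_succ {r : ℕ} (M : Fin r → ℕ) (j0 : Fin r) :
    ∀ j, M j ≤ Function.update M j0 (M j0 + 1) j := by
  intro j
  rw [Function.update_apply]
  split
  · next h => subst h; omega
  · exact le_rfl

lemma update_succ_ne {r : ℕ} (M : Fin r → ℕ) (j0 : Fin r) :
    Function.update M j0 (M j0 + 1) ≠ M := by
  intro h
  have := congrFun h j0
  rw [Function.update_self] at this
  omega

/-- The squarefree block: all squarefree monomials in `e` variables. -/
lemma sf_block (e : ℕ) (he : 1 ≤ e) : IsPureOSeq (fun i => e.choose i) e := by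
  classical
  set ind : Finset (Fin e) → (Fin e → ℕ) := fun s => fun j => if j ∈ s then 1 else 0 with hind
  have degInd : ∀ s, monDeg (ind s) = s.card := by
    intro s
    unfold monDeg
    simp [hind, Finset.sum_ite_mem]
  have injInd : Function.Injective ind := by
    intro s s' hss
    ext j
    have := congrFun hss j
    simp only [hind] at this
    by_cases h1 : j ∈ s <;> by_cases h2 : j ∈ s' <;> simp [h1, h2] at this ⊢
  set X : Finset (Fin e → ℕ) := (Finset.univ : Finset (Finset (Fin e))).image ind with hX
  have memX : ∀ M, M ∈ X ↔ ∃ s, ind s = M := by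
    intro M; simp [hX]
  refine ⟨e, X, ⟨⟨⟨ind ∅, (memX _).mpr ⟨∅, rfl⟩⟩, ?_⟩, ?_, ?_, ?_⟩, ?_⟩
  · -- downward closed
    intro M hM N hN
    obtain ⟨s, rfl⟩ := (memX M).mp hM
    refine (memX N).mpr ⟨Finset.univ.filter (fun j => N j = 1), ?_⟩
    funext j
    have hle := hN j
    simp only [hind] at hle ⊢
    by_cases h1 : j ∈ s
    · simp [h1] at hle
      interval_cases h : N j <;> simp [h]
    · simp [h1] at hle
      simp [hle]
  · -- degrees ≤ e
    intro M hM
    obtain ⟨s, rfl⟩ := (memX M).mp hM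
    rw [degInd]
    simpa using Finset.card_le_univ s
  · -- a monomial of degree e
    refine ⟨ind Finset.univ, (memX _).mpr ⟨_, rfl⟩, ?_⟩
    rw [degInd]
    simp
  · -- maximal monomials have degree e
    rintro M ⟨hM, hmax⟩
    obtain ⟨s, rfl⟩ := (memX _).mp hM
    have hs : s = Finset.univ := by
      by_contra hne
      obtain ⟨j, hj⟩ : ∃ j, j ∉ s := by
        by_contra hall
        push_neg at hall
        exact hne (Finset.eq_univ_iff_forall.mpr hall)
      have hmem : ind (insert j s) ∈ X := (memX _).mpr ⟨_, rfl⟩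
      have hle : ∀ j', ind s j' ≤ ind (insert j s) j' := by
        intro j'
        simp only [hind]
        by_cases h1 : j' ∈ s
        · simp [h1, Finset.mem_insert_of_mem h1]
        · simp [h1]
      have := hmax _ hmem hle
      have hj' := congrFun this j
      simp only [hind] at hj'
      simp [hj, Finset.mem_insert_self] at hj'
    rw [degInd, hs]
    simp
  · -- h-vector
    intro i hi
    have : X.filter (fun M => monDeg M = i) = (Finset.univ.powersetCard i).image ind := by
      ext M
      simp only [Finset.mem_filter, Finset.mem_image, Finset.mem_powersetCard]
      constructor
      · rintro ⟨hM, hdeg⟩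
        obtain ⟨s, rfl⟩ := (memX M).mp hM
        exact ⟨s, ⟨Finset.subset_univ s, by rw [degInd] at hdeg; exact hdeg⟩, rfl⟩
      · rintro ⟨s, ⟨-, hcard⟩, rfl⟩
        exact ⟨(memX _).mpr ⟨s, rfl⟩, by rw [degInd]; exact hcard⟩
    rw [this, Finset.card_image_of_injective _ injInd, Finset.card_powersetCard]
    simp

end NonDiffAux
namespace NonDiffAux

open Finset

lemma monDeg_two (M : Fin 2 → ℕ) : monDeg M = M 0 + M 1 := by
  simp [monDeg, Fin.sum_univ_two]

/-- The staircase block in two variables: `{(a,b) : a + b ≤ e, b ≤ d}`. -/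
lemma stair_block (e d : ℕ) (hd : d ≤ e) :
    IsPureOSeq (fun i => min i d + 1) e := by
  classical
  set ι : ℕ × ℕ → (Fin 2 → ℕ) := fun p => fun j => if j = 0 then p.1 else p.2 with hι
  have ιval0 : ∀ p, ι p 0 = p.1 := by intro p; simp [hι]
  have ιval1 : ∀ p, ι p 1 = p.2 := by intro p; simp [hι]
  have ιeta : ∀ M : Fin 2 → ℕ, ι (M 0, M 1) = M := by
    intro M
    funext j
    fin_cases j <;> simp [hι]
  set X : Finset (Fin 2 → ℕ) :=
    ((Finset.range (e+1) ×ˢ Finset.range (e+1)).filter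
      (fun p => p.1 + p.2 ≤ e ∧ p.2 ≤ d)).image ι with hX
  have memX : ∀ M : Fin 2 → ℕ, M ∈ X ↔ M 0 + M 1 ≤ e ∧ M 1 ≤ d := by
    intro M
    simp only [hX, Finset.mem_image, Finset.mem_filter, Finset.mem_product, Finset.mem_range]
    constructor
    · rintro ⟨p, ⟨-, hp⟩, rfl⟩
      rw [ιval0, ιval1]; exact hp
    · rintro ⟨h1, h2⟩
      exact ⟨(M 0, M 1), ⟨⟨by omega, by omega⟩, by simp [h1, h2]⟩, ιeta M⟩
  refine ⟨2, X, ⟨⟨⟨ι (0,0), (memX _).mpr (by simp [ιval0, ιval1])⟩, ?_⟩, ?_, ?_, ?_⟩, ?_⟩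
  · intro M hM N hN
    have hM' := (memX M).mp hM
    refine (memX N).mpr ⟨?_, ?_⟩
    · have := hN 0; have := hN 1; omega
    · have := hN 1; omega
  · intro M hM
    rw [monDeg_two]
    exact ((memX M).mp hM).1
  · refine ⟨ι (e, 0), (memX _).mpr (by rw [ιval0, ιval1]; simp), ?_⟩
    rw [monDeg_two, ιval0, ιval1]
    simp
  · rintro M ⟨hM, hmax⟩
    obtain ⟨h1, h2⟩ := (memX M).mp hM
    rw [monDeg_two]
    by_contra hne
    have hlt : M 0 + M 1 < e := by omega
    have hmem : Function.update M 0 (M 0 + 1) ∈ X := by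
      refine (memX _).mpr ⟨?_, ?_⟩
      · rw [Function.update_self, Function.update_of_ne (by decide)]; omega
      · rw [Function.update_of_ne (by decide)]; omega
    have := hmax _ hmem (le_update_succ M 0)
    exact update_succ_ne M 0 this
  · intro i hi
    have : X.filter (fun M => monDeg M = i)
        = (Finset.range (min i d + 1)).image (fun b => ι (i - b, b)) := by
      ext M
      simp only [Finset.mem_filter, Finset.mem_image, Finset.mem_range]
      constructor
      · rintro ⟨hM, hdeg⟩
        obtain ⟨h1, h2⟩ := (memX M).mp hM
        rw [monDeg_two] at hdeg
        refine ⟨M 1, by omega, ?_⟩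
        have : (i - M 1, M 1) = (M 0, M 1) := by
          have : i - M 1 = M 0 := by omega
          simp [this]
        rw [this, ιeta]
      · rintro ⟨b, hb, rfl⟩
        constructor
        · exact (memX _).mpr ⟨by rw [ιval0, ιval1]; omega, by rw [ιval1]; omega⟩
        · rw [monDeg_two, ιval0, ιval1]; omega
    rw [this, Finset.card_image_of_injOn, Finset.card_range]
    intro a ha b hb hab
    have := congrFun hab 1
    simpa [hι] using this

/-- The full polynomial block in 4 variables truncated at degree `e`. -/
lemma poly4_block (e : ℕ) :
    IsPureOSeq (fun i => (Finset.Nat.antidiagonalTuple 4 i).card) e := by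
  classical
  set X : Finset (Fin 4 → ℕ) :=
    (Finset.range (e+1)).biUnion (fun n => Finset.Nat.antidiagonalTuple 4 n) with hX
  have memX : ∀ M : Fin 4 → ℕ, M ∈ X ↔ monDeg M ≤ e := by
    intro M
    simp only [hX, Finset.mem_biUnion, Finset.mem_range, Finset.Nat.mem_antidiagonalTuple]
    constructor
    · rintro ⟨n, hn, rfl⟩; unfold monDeg; omega
    · intro h; exact ⟨monDeg M, by omega, rfl⟩
  refine ⟨4, X, ⟨⟨⟨fun _ => 0, (memX _).mpr (by rw [monDeg_zero_fun]; omega)⟩, ?_⟩, ?_, ?_, ?_⟩, ?_⟩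
  · intro M hM N hN
    refine (memX N).mpr (le_trans ?_ ((memX M).mp hM))
    exact Finset.sum_le_sum (fun j _ => hN j)
  · intro M hM; exact (memX M).mp hM
  · refine ⟨fun j => if j = 0 then e else 0, (memX _).mpr ?_, ?_⟩ <;>
      simp [monDeg, Fin.sum_univ_four]
  · rintro M ⟨hM, hmax⟩
    by_contra hne
    have hlt : monDeg M < e := lt_of_le_of_ne ((memX M).mp hM) hne
    have hmem : Function.update M 0 (M 0 + 1) ∈ X := by
      refine (memX _).mpr ?_
      rw [monDeg_update_succ]
      omega
    have := hmax _ hmem (le_update_succ M 0)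
    exact update_succ_ne M 0 this
  · intro i hi
    have hset : X.filter (fun M => monDeg M = i) = Finset.Nat.antidiagonalTuple 4 i := by
      ext M
      simp only [Finset.mem_filter, Finset.Nat.mem_antidiagonalTuple]
      constructor
      · rintro ⟨-, hdeg⟩; exact hdeg
      · intro h
        exact ⟨(memX M).mpr (by unfold monDeg; omega), h⟩
    rw [hset]

end NonDiffAux
namespace NonDiffAux

lemma macaulayBound_zero (d : ℕ) : macaulayBound 0 d = 0 := by
  simp [macaulayBound]

lemma macaulayBound_eight_three : macaulayBound 8 3 = 10 := by
  have hf3 : Nat.findGreatest (fun k => Nat.choose k 3 ≤ 8) 11 = 4 := by decide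
  have hf2 : Nat.findGreatest (fun k => Nat.choose k 2 ≤ 4) 6 = 3 := by decide
  have hf1 : Nat.findGreatest (fun k => Nat.choose k 1 ≤ 1) 2 = 1 := by decide
  have h0 : macaulayBound 0 0 = 0 := by simp [macaulayBound]
  have h1 : macaulayBound 1 1 = 1 := by
    simp only [macaulayBound, hf1]
    norm_num [h0, Nat.choose]
  have h2 : macaulayBound 4 2 = 5 := by
    simp only [macaulayBound, hf2]
    norm_num [Nat.choose]
    rw [h1]
  simp only [macaulayBound, hf3]
  norm_num [Nat.choose]
  rw [h2]

lemma case4 :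
    ∃ h : ℕ → ℕ, IsPureOSeq h 4 ∧ (∀ i, i + 1 ≤ 4 → h i ≤ h (i + 1)) ∧
      ¬ IsDifferentiable h 4 := by
  classical
  refine ⟨fun i => if i = 0 then 1 else Nat.choose 4 i + (Finset.Nat.antidiagonalTuple 4 i).card,
    ?_, ?_, ?_⟩
  · exact pure_join (sf_block 4 (by norm_num)) (poly4_block 4)
  · intro i hi
    have hi' : i ≤ 3 := by omega
    interval_cases i <;> decide
  · rintro ⟨-, -, hmac⟩
    have H := hmac 3 (by norm_num) (by norm_num)
    norm_num at H
    simp only [show Nat.choose 4 2 = 6 by decide,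
      show (Finset.Nat.antidiagonalTuple 4 2).card = 10 by decide,
      show (Finset.Nat.antidiagonalTuple 4 3).card = 20 by decide,
      show (Finset.Nat.antidiagonalTuple 4 4).card = 35 by decide] at H
    norm_num at H
    rw [macaulayBound_eight_three] at H
    omega

end NonDiffAux
namespace NonDiffAux

lemma choose2_ge (m : ℕ) : 2 * (m + 5) ≤ (m + 5).choose 2 := by
  induction m with
  | zero => decide
  | succ m ih =>
      have h : (m + 6).choose 2 = (m + 5).choose 1 + (m + 5).choose 2 :=
        Nat.choose_succ_succ (m + 5) 1
      rw [Nat.choose_one_right] at h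
      show 2 * (m + 6) ≤ (m + 6).choose 2
      omega

lemma case5 (m : ℕ) :
    ∃ h : ℕ → ℕ, IsPureOSeq h (m + 5) ∧ (∀ i, i + 1 ≤ m + 5 → h i ≤ h (i + 1)) ∧
      ¬ IsDifferentiable h (m + 5) := by
  classical
  set t := (m + 5).choose 2 - 2 * (m + 5) with ht
  set c := (m + 5).choose ((m + 5) / 2) with hc
  set h : ℕ → ℕ := fun i => if i = 0 then 1 else
    (m + 5).choose i + (m + 5) * (min i (m + 5) + 1) + t * (min i (m + 4) + 1)
      + c * (min i (m + 3) + 1) with hh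
  -- basic facts
  have hAe : (m + 5).choose (m + 4) = m + 5 := by
    have h1 := Nat.choose_symm (n := m + 5) (k := 1) (by omega)
    rw [Nat.choose_one_right] at h1
    exact h1
  have hA2 : (m + 5).choose (m + 3) = (m + 5).choose 2 :=
    Nat.choose_symm (n := m + 5) (k := 2) (by omega)
  have ht2 : 2 * (m + 5) + t = (m + 5).choose 2 := by
    have := choose2_ge m
    omega
  have hmid : ∀ i, (m + 5).choose i ≤ c := fun i => Nat.choose_le_middle i (m + 5)
  -- value identities
  have hflat : h (m + 4) = h (m + 3) := by
    simp only [hh, if_neg (by omega : ¬ m + 4 = 0), if_neg (by omega : ¬ m + 3 = 0)]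
    rw [show min (m + 4) (m + 5) = m + 4 by omega, show min (m + 4) (m + 4) = m + 4 by omega,
      show min (m + 4) (m + 3) = m + 3 by omega, show min (m + 3) (m + 5) = m + 3 by omega,
      show min (m + 3) (m + 4) = m + 3 by omega, show min (m + 3) (m + 3) = m + 3 by omega]
    have r1 : (m + 5) * (m + 4 + 1) = (m + 5) * (m + 3 + 1) + (m + 5) := by ring
    have r2 : t * (m + 4 + 1) = t * (m + 3 + 1) + t := by ring
    rw [hAe, hA2]
    omega
  have htop : h (m + 5) = h (m + 4) + 1 := by
    simp only [hh, if_neg (by omega : ¬ m + 5 = 0), if_neg (by omega : ¬ m + 4 = 0)]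
    rw [show min (m + 5) (m + 5) = m + 5 by omega, show min (m + 5) (m + 4) = m + 4 by omega,
      show min (m + 5) (m + 3) = m + 3 by omega, show min (m + 4) (m + 5) = m + 4 by omega,
      show min (m + 4) (m + 4) = m + 4 by omega, show min (m + 4) (m + 3) = m + 3 by omega]
    have r1 : (m + 5) * (m + 5 + 1) = (m + 5) * (m + 4 + 1) + (m + 5) := by ring
    rw [hAe, Nat.choose_self]
    omega
  refine ⟨h, ?_, ?_, ?_⟩
  · -- pure O-sequence
    have P1 := pure_joinMul (sf_block (m + 5) (by omega))
      (stair_block (m + 5) (m + 5) le_rfl) (m + 5)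
    have P2 := pure_joinMul P1 (stair_block (m + 5) (m + 4) (by omega)) t
    have P3 := pure_joinMul P2 (stair_block (m + 5) (m + 3) (by omega)) c
    refine pure_transport P3 (fun i hi => ?_)
    by_cases h0 : i = 0
    · simp [hh, h0]
    · simp only [hh, if_neg h0]
  · -- nondecreasing
    intro i hi
    by_cases h0 : i = 0
    · subst h0
      have h1 : (1 : ℕ) ≤ (m + 5).choose 1 := by rw [Nat.choose_one_right]; omega
      simp only [hh, if_pos rfl, show (0:ℕ) + 1 = 1 from rfl, if_neg (one_ne_zero)]
      omega
    · rcases lt_trichotomy (i + 1) (m + 4) with hcase | hcase | hcase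
      · -- i + 1 ≤ m + 3
        simp only [hh, if_neg h0, if_neg (by omega : ¬ i + 1 = 0)]
        rw [show min i (m + 5) = i by omega, show min i (m + 4) = i by omega,
          show min i (m + 3) = i by omega, show min (i + 1) (m + 5) = i + 1 by omega,
          show min (i + 1) (m + 4) = i + 1 by omega, show min (i + 1) (m + 3) = i + 1 by omega]
        have r1 : (m + 5) * (i + 1 + 1) = (m + 5) * (i + 1) + (m + 5) := by ring
        have r2 : t * (i + 1 + 1) = t * (i + 1) + t := by ring
        have r3 : c * (i + 1 + 1) = c * (i + 1) + c := by ring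
        have h1 := hmid i
        omega
      · -- i = m + 3
        have : i = m + 3 := by omega
        subst this
        exact le_of_eq hflat.symm
      · -- i = m + 4
        have : i = m + 4 := by omega
        subst this
        rw [htop]
        omega
  · -- not differentiable
    rintro ⟨-, -, hmac⟩
    have H := hmac (m + 4) (by omega) (by omega)
    simp only [if_neg (by omega : ¬ m + 4 + 1 = 0), if_neg (by omega : ¬ m + 4 = 0)] at H
    have h1 : h (m + 4) - h (m + 4 - 1) = 0 := by
      rw [show m + 4 - 1 = m + 3 from rfl, hflat]
      omega
    have h2 : h (m + 4 + 1) - h (m + 4 + 1 - 1) = 1 := by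
      rw [show m + 4 + 1 - 1 = m + 4 from rfl, show m + 4 + 1 = m + 5 from rfl, htop]
      omega
    rw [h1, h2, macaulayBound_zero] at H
    omega

end NonDiffAux

/-- For every integer `e ≥ 4` there is a pure O-sequence of socle
degree `e` that is non-decreasing but not differentiable. -/
theorem exists_nondecreasing_pure_not_differentiable (e : ℕ) (he : 4 ≤ e) :
    ∃ h : ℕ → ℕ, IsPureOSeq h e ∧ (∀ i, i + 1 ≤ e → h i ≤ h (i + 1)) ∧
      ¬ IsDifferentiable h e := by
  by_cases h4 : e = 4
  · subst h4
    exact NonDiffAux.case4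
  · obtain ⟨m, rfl⟩ : ∃ m, e = m + 5 := ⟨e - 5, by omega⟩
    exact NonDiffAux.case5 m
end

section
/- For positive integers r and h_2, the sequence (1, r, h_2) is a pure O-sequence if and only if ⌈r/2⌉ ≤ h_2 ≤ C(r+1, 2). -/
/-- The sequence `(1, a, b)` (padded by zeros). -/
def seq3 (a b : ℕ) : ℕ → ℕ := fun i => [1, a, b].getD i 0






namespace PureAux

variable {n : ℕ}

/-- The monomial `y_j`. -/
def sg (j : Fin n) : Fin n → ℕ := Pi.single j 1

lemma sg_apply (j i : Fin n) : sg j i = if i = j then 1 else 0 := by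
  simp [sg, Pi.single_apply]

lemma monDeg_sg (j : Fin n) : monDeg (sg j) = 1 := by
  simp [monDeg, sg, Finset.sum_pi_single']

lemma monDeg_add (M N : Fin n → ℕ) : monDeg (M + N) = monDeg M + monDeg N := by
  simp [monDeg, Finset.sum_add_distrib]

lemma monDeg_zero : monDeg (0 : Fin n → ℕ) = 0 := by simp [monDeg]

lemma monDeg_mono {M N : Fin n → ℕ} (h : ∀ j, N j ≤ M j) : monDeg N ≤ monDeg M :=
  Finset.sum_le_sum fun i _ => h i

lemma eq_of_le_of_deg_le {M N : Fin n → ℕ} (h : ∀ j, N j ≤ M j)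
    (hd : monDeg M ≤ monDeg N) : N = M := by
  have := (Finset.sum_eq_sum_iff_of_le (fun i _ => h i)).1
    (le_antisymm (monDeg_mono h) hd)
  funext i; exact this i (Finset.mem_univ i)

lemma eq_zero_of_deg_zero {M : Fin n → ℕ} (h : monDeg M = 0) : M = 0 := by
  funext i
  exact (Finset.sum_eq_zero_iff).1 h i (Finset.mem_univ i)

lemma monDeg_pos_exists {M : Fin n → ℕ} (h : 1 ≤ monDeg M) : ∃ j, 1 ≤ M j := by
  by_contra hc
  push_neg at hc
  have : monDeg M = 0 := Finset.sum_eq_zero (fun i _ => by have := hc i; omega)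
  omega

lemma eq_sg_of_deg_one {M : Fin n → ℕ} (h : monDeg M = 1) : ∃ j, M = sg j := by
  obtain ⟨j, hj⟩ := monDeg_pos_exists (M := M) (by omega)
  have hsplit : M j + ∑ i ∈ Finset.univ.erase j, M i = 1 := by
    rw [Finset.add_sum_erase _ _ (Finset.mem_univ j)]; exact h
  have h0 : ∀ i ∈ Finset.univ.erase j, M i = 0 := by
    rw [← Finset.sum_eq_zero_iff]; omega
  refine ⟨j, funext fun i => ?_⟩
  rcases eq_or_ne i j with rfl | hne
  · simp [sg]; omega
  · have := h0 i (Finset.mem_erase.2 ⟨hne, Finset.mem_univ i⟩)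
    simp [sg, Pi.single_apply, hne, this]

lemma eq_sg_add_sg_of_deg_two {M : Fin n → ℕ} (h : monDeg M = 2) :
    ∃ j k, j ≤ k ∧ M = sg j + sg k := by
  obtain ⟨j, hj⟩ := monDeg_pos_exists (M := M) (by omega)
  have hsgle : ∀ i, sg j i ≤ M i := by
    intro i; rcases eq_or_ne i j with rfl | hne
    · simpa [sg] using hj
    · simp [sg, Pi.single_apply, hne]
  set M' : Fin n → ℕ := fun i => M i - sg j i with hM'
  have hMeq : M = sg j + M' := by
    funext i; have := hsgle i; simp only [hM', Pi.add_apply]; omega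
  have hdeg' : monDeg M' = 1 := by
    have h2 : monDeg M = monDeg (sg j) + monDeg M' := by rw [hMeq, monDeg_add]
    rw [monDeg_sg] at h2; omega
  obtain ⟨k, hk⟩ := eq_sg_of_deg_one hdeg'
  rcases le_total j k with hle | hle
  · exact ⟨j, k, hle, by rw [hMeq, hk]⟩
  · exact ⟨k, j, hle, by rw [hMeq, hk, add_comm]⟩

lemma sg_injective : Function.Injective (sg (n := n)) := by
  intro j k h
  have := congrFun h j
  simp only [sg_apply, if_pos rfl] at this
  by_contra hne
  simp [hne] at this

lemma inj2 {j k j' k' : Fin n} (hjk : j ≤ k) (hjk' : j' ≤ k')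
    (h : sg j + sg k = sg j' + sg k') : j = j' ∧ k = k' := by
  have hv : ∀ i : Fin n, (if i = j then 1 else 0) + (if i = k then 1 else 0) =
      ((if i = j' then 1 else 0) + (if i = k' then 1 else 0) : ℕ) := by
    intro i
    have := congrFun h i
    simpa [sg_apply] using this
  rcases lt_trichotomy j j' with h1 | h1 | h1
  · exfalso
    have hj := hv j
    have : j ≠ j' := ne_of_lt h1
    have : j ≠ k' := ne_of_lt (lt_of_lt_of_le h1 hjk')
    split_ifs at hj <;> simp_all
  · subst h1
    refine ⟨rfl, ?_⟩
    have hk := hv k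
    by_contra hne
    split_ifs at hk <;> simp_all
  · exfalso
    have hj := (hv j').symm
    have : j' ≠ j := ne_of_lt h1
    have : j' ≠ k := ne_of_lt (lt_of_lt_of_le h1 hjk)
    split_ifs at hj <;> simp_all

/-- The degree-2 monomial associated with an unordered pair of variables. -/
def ψ : Sym2 (Fin n) → (Fin n → ℕ) :=
  Sym2.lift ⟨fun j k => sg j + sg k, fun _ _ => add_comm _ _⟩

@[simp] lemma ψ_mk (j k : Fin n) : ψ s(j, k) = sg j + sg k := rfl

lemma monDeg_ψ (z : Sym2 (Fin n)) : monDeg (ψ z) = 2 := by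
  induction z using Sym2.ind with
  | _ a b => simp [monDeg_add, monDeg_sg]

lemma ψ_injective : Function.Injective (ψ (n := n)) := by
  intro z w h
  induction z using Sym2.ind with
  | _ a b =>
    induction w using Sym2.ind with
    | _ c d =>
      simp only [ψ_mk] at h
      rw [Sym2.eq_iff]
      rcases le_total a b with hab | hab <;> rcases le_total c d with hcd | hcd
      · exact Or.inl (inj2 hab hcd h)
      · have := inj2 hab hcd (by rw [h, add_comm])
        exact Or.inr ⟨this.1, this.2⟩
      · have := inj2 hab hcd (by rw [← h, add_comm])
        exact Or.inr ⟨this.2, this.1⟩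
      · have := inj2 hab hcd (by rw [add_comm, h, add_comm])
        exact Or.inl ⟨this.2, this.1⟩

end PureAux

namespace PureAux

lemma forward {r h₂ : ℕ} (h : IsPureOSeq (seq3 r h₂) 2) :
    (r + 1) / 2 ≤ h₂ ∧ h₂ ≤ Nat.choose (r + 1) 2 := by
  classical
  obtain ⟨n, X, ⟨⟨hne, hcl⟩, hle, hex, hmax⟩, hhv⟩ := h
  have h1 : (X.filter fun M => monDeg M = 1).card = r := by
    have := hhv 1 (by norm_num); simpa [seq3] using this.symm
  have h2 : (X.filter fun M => monDeg M = 2).card = h₂ := by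
    have := hhv 2 (by norm_num); simpa [seq3] using this.symm
  set T : Finset (Fin n) := Finset.univ.filter (fun j => sg j ∈ X) with hT
  have hTcard : T.card = r := by
    have himg : X.filter (fun M => monDeg M = 1) = T.image sg := by
      ext M
      simp only [Finset.mem_filter, Finset.mem_image, hT, Finset.mem_univ, true_and]
      constructor
      · rintro ⟨hM, hdeg⟩
        obtain ⟨j, rfl⟩ := eq_sg_of_deg_one hdeg
        exact ⟨j, hM, rfl⟩
      · rintro ⟨j, hj, rfl⟩
        exact ⟨hj, monDeg_sg j⟩
    rw [himg, Finset.card_image_of_injective _ sg_injective] at h1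
    exact h1
  constructor
  · -- lower bound
    have hstep : ∀ j ∈ T, ∃ N ∈ X, monDeg N = 2 ∧ 1 ≤ N j := by
      intro j hj
      rw [hT, Finset.mem_filter] at hj
      have hjX := hj.2
      have hnotmax : ¬ IsMaxMon X (sg j) := by
        intro hmax'
        have := hmax _ hmax'
        rw [monDeg_sg] at this; omega
      rw [IsMaxMon] at hnotmax
      push_neg at hnotmax
      obtain ⟨N, hNX, hNle, hNne⟩ := hnotmax hjX
      have hdN : monDeg N = 2 := by
        have hge : 1 ≤ monDeg N := by
          have := monDeg_mono hNle; rw [monDeg_sg] at this; omega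
        have hle2 := hle N hNX
        rcases Nat.lt_or_ge (monDeg N) 2 with hlt | hge2
        · exact absurd ((eq_of_le_of_deg_le hNle (by rw [monDeg_sg]; omega)).symm) hNne
        · omega
      exact ⟨N, hNX, hdN, le_trans (by simp [sg_apply]) (hNle j)⟩
    choose! f hfX hf2 hf1 using hstep
    have hbound : ∀ b ∈ T.image f, (T.filter (fun a => f a = b)).card ≤ 2 := by
      intro b hb
      obtain ⟨j₀, hj₀, rfl⟩ := Finset.mem_image.1 hb
      have hfil : T.filter (fun a => f a = f j₀) ⊆
          Finset.univ.filter (fun i => 1 ≤ f j₀ i) := by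
        intro a ha
        rw [Finset.mem_filter] at ha ⊢
        refine ⟨Finset.mem_univ a, ?_⟩
        have := hf1 a ha.1
        rw [ha.2] at this; exact this
      have hcard2 : (Finset.univ.filter (fun i => 1 ≤ f j₀ i)).card ≤ 2 := by
        have hsum := Finset.card_nsmul_le_sum
          (Finset.univ.filter (fun i => 1 ≤ f j₀ i)) (f j₀) 1
          (fun x hx => (Finset.mem_filter.1 hx).2)
        have hsum2 : ∑ i ∈ Finset.univ.filter (fun i => 1 ≤ f j₀ i), f j₀ i ≤ monDeg (f j₀) :=
          Finset.sum_le_sum_of_subset (Finset.filter_subset _ _)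
        have hd := hf2 j₀ hj₀
        have h3 : (Finset.univ.filter (fun i => 1 ≤ f j₀ i)).card • 1 ≤ monDeg (f j₀) :=
          le_trans hsum hsum2
        simp only [smul_eq_mul, mul_one] at h3
        omega
      exact le_trans (Finset.card_le_card hfil) hcard2
    have hcount := Finset.card_le_mul_card_image (f := f) T 2 hbound
    have himg2 : T.image f ⊆ X.filter (fun M => monDeg M = 2) := by
      intro M hM
      obtain ⟨j, hj, rfl⟩ := Finset.mem_image.1 hM
      exact Finset.mem_filter.2 ⟨hfX j hj, hf2 j hj⟩
    have hr2 : r ≤ 2 * h₂ := by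
      rw [← hTcard, ← h2]
      exact le_trans hcount (Nat.mul_le_mul_left 2 (Finset.card_le_card himg2))
    omega
  · -- upper bound
    have hsub : X.filter (fun M => monDeg M = 2) ⊆ T.sym2.image ψ := by
      intro M hM
      rw [Finset.mem_filter] at hM
      obtain ⟨hMX, hdeg⟩ := hM
      obtain ⟨j, k, hjk, rfl⟩ := eq_sg_add_sg_of_deg_two hdeg
      have hjX : sg j ∈ X := by
        refine hcl _ hMX (sg j) (fun i => ?_)
        exact le_trans (le_refl _) (Nat.le_add_right _ _)
      have hkX : sg k ∈ X := by
        refine hcl _ hMX (sg k) (fun i => ?_)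
        exact Nat.le_add_left _ _
      have hjT : j ∈ T := by rw [hT, Finset.mem_filter]; exact ⟨Finset.mem_univ j, hjX⟩
      have hkT : k ∈ T := by rw [hT, Finset.mem_filter]; exact ⟨Finset.mem_univ k, hkX⟩
      exact Finset.mem_image.2 ⟨s(j, k), Finset.mk_mem_sym2_iff.2 ⟨hjT, hkT⟩, rfl⟩
    calc h₂ = (X.filter fun M => monDeg M = 2).card := h2.symm
      _ ≤ (T.sym2.image ψ).card := Finset.card_le_card hsub
      _ ≤ T.sym2.card := Finset.card_image_le
      _ = (T.card + 1).choose 2 := Finset.card_sym2 T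
      _ = (r + 1).choose 2 := by rw [hTcard]

lemma backward {r h₂ : ℕ} (hr : 0 < r) (hh : 0 < h₂)
    (hlow : (r + 1) / 2 ≤ h₂) (hup : h₂ ≤ Nat.choose (r + 1) 2) :
    IsPureOSeq (seq3 r h₂) 2 := by
  classical
  set m := (r + 1) / 2 with hm
  have hr1 : r - 1 < r := by omega
  let fin' : ℕ → Fin r := fun a => ⟨min a (r - 1), by omega⟩
  let g : ℕ → (Fin r → ℕ) := fun i => ψ s(fin' (2 * i), fin' (2 * i + 1))
  set S₀ : Finset (Fin r → ℕ) := (Finset.range m).image g with hS₀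
  set P : Finset (Fin r → ℕ) := Finset.univ.sym2.image ψ with hP
  have hPcard : P.card = Nat.choose (r + 1) 2 := by
    rw [hP, Finset.card_image_of_injective _ ψ_injective, Finset.card_sym2]
    simp
  have hS₀P : S₀ ⊆ P := by
    intro M hM
    obtain ⟨i, _, rfl⟩ := Finset.mem_image.1 hM
    exact Finset.mem_image.2 ⟨_, by simp [Finset.sym2_univ], rfl⟩
  have hS₀card : S₀.card ≤ h₂ := le_trans (le_trans Finset.card_image_le (by simp)) hlow
  obtain ⟨S, hS₀S, hSP, hScard⟩ :=
    Finset.exists_subsuperset_card_eq hS₀P hS₀card (hPcard ▸ hup)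
  have hSdeg : ∀ M ∈ S, monDeg M = 2 := by
    intro M hM
    obtain ⟨z, _, rfl⟩ := Finset.mem_image.1 (hSP hM)
    exact monDeg_ψ z
  have hcover : ∀ j : Fin r, ∃ M ∈ S, 1 ≤ M j := by
    intro j
    have hjr : j.val < r := j.isLt
    refine ⟨g (j.val / 2),
      hS₀S (Finset.mem_image.2 ⟨j.val / 2, Finset.mem_range.2 (by omega), rfl⟩), ?_⟩
    have hj : j.val = 2 * (j.val / 2) ∨ j.val = 2 * (j.val / 2) + 1 := by omega
    rcases hj with hj | hj
    · have hfj : fin' (2 * (j.val / 2)) = j := by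
        apply Fin.ext; simp only [fin']; omega
      calc (1:ℕ) = sg j j := by simp [sg_apply]
        _ ≤ g (j.val / 2) j := by
            rw [show g (j.val / 2) =
              sg (fin' (2 * (j.val / 2))) + sg (fin' (2 * (j.val / 2) + 1)) from rfl, hfj]
            exact Nat.le_add_right _ _
    · have hfj : fin' (2 * (j.val / 2) + 1) = j := by
        apply Fin.ext; simp only [fin']; omega
      calc (1:ℕ) = sg j j := by simp [sg_apply]
        _ ≤ g (j.val / 2) j := by
            rw [show g (j.val / 2) =
              sg (fin' (2 * (j.val / 2))) + sg (fin' (2 * (j.val / 2) + 1)) from rfl, hfj]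
            exact Nat.le_add_left _ _
  set X : Finset (Fin r → ℕ) := insert 0 ((Finset.univ.image sg) ∪ S) with hX
  have hmem : ∀ M : Fin r → ℕ, M ∈ X ↔ M = 0 ∨ (∃ j, M = sg j) ∨ M ∈ S := by
    intro M
    simp only [hX, Finset.mem_insert, Finset.mem_union, Finset.mem_image, Finset.mem_univ,
      true_and]
    constructor
    · rintro (rfl | ⟨j, rfl⟩ | hS)
      · exact Or.inl rfl
      · exact Or.inr (Or.inl ⟨j, rfl⟩)
      · exact Or.inr (Or.inr hS)
    · rintro (rfl | ⟨j, rfl⟩ | hS)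
      · exact Or.inl rfl
      · exact Or.inr (Or.inl ⟨j, rfl⟩)
      · exact Or.inr (Or.inr hS)
  have hdeg_le : ∀ M ∈ X, monDeg M ≤ 2 := by
    intro M hM
    rcases (hmem M).1 hM with rfl | ⟨j, rfl⟩ | hMS
    · simp [monDeg_zero]
    · simp [monDeg_sg]
    · exact le_of_eq (hSdeg M hMS)
  have hSne : S.Nonempty := Finset.card_pos.1 (by rw [hScard]; exact hh)
  refine ⟨r, X, ⟨⟨⟨0, (hmem 0).2 (Or.inl rfl)⟩, ?_⟩, hdeg_le, ?_, ?_⟩, ?_⟩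
  · -- closure
    intro M hM N hNle
    have hdN : monDeg N ≤ 2 := le_trans (monDeg_mono hNle) (hdeg_le M hM)
    rcases Nat.lt_or_ge (monDeg N) 1 with h0 | h1
    · have hN0 : N = 0 := eq_zero_of_deg_zero (by omega)
      rw [hN0]; exact (hmem 0).2 (Or.inl rfl)
    rcases Nat.lt_or_ge (monDeg N) 2 with h1' | h2
    · obtain ⟨j, rfl⟩ := eq_sg_of_deg_one (M := N) (by omega)
      exact (hmem _).2 (Or.inr (Or.inl ⟨j, rfl⟩))
    · have hNM : N = M := eq_of_le_of_deg_le hNle (le_trans (hdeg_le M hM) h2)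
      rw [hNM]; exact hM
  · -- existence of degree-2 element
    obtain ⟨N, hNS⟩ := hSne
    exact ⟨N, (hmem N).2 (Or.inr (Or.inr hNS)), hSdeg N hNS⟩
  · -- maximal monomials have degree 2
    rintro M ⟨hMX, hMmax⟩
    rcases (hmem M).1 hMX with rfl | ⟨j, rfl⟩ | hMS
    · obtain ⟨N, hNS⟩ := hSne
      have hN0 : N = 0 :=
        hMmax N ((hmem N).2 (Or.inr (Or.inr hNS))) (fun i => Nat.zero_le _)
      rw [← hN0]; exact hSdeg N hNS
    · obtain ⟨N, hNS, hNj⟩ := hcover j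
      have hle' : ∀ i, sg j i ≤ N i := fun i => by
        rcases eq_or_ne i j with rfl | hne
        · simpa [sg_apply] using hNj
        · simp [sg_apply, hne]
      have hN : N = sg j := hMmax N ((hmem N).2 (Or.inr (Or.inr hNS))) hle'
      rw [← hN]; exact hSdeg N hNS
    · exact hSdeg M hMS
  · -- h-vector
    intro i hi
    interval_cases i
    · have hf0 : X.filter (fun M => monDeg M = 0) = {0} := by
        ext M
        simp only [Finset.mem_filter, Finset.mem_singleton]
        constructor
        · rintro ⟨_, h0⟩; exact eq_zero_of_deg_zero h0
        · rintro rfl; exact ⟨(hmem 0).2 (Or.inl rfl), monDeg_zero⟩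
      rw [hf0]; simp [seq3]
    · have hf1 : X.filter (fun M => monDeg M = 1) = Finset.univ.image sg := by
        ext M
        simp only [Finset.mem_filter, Finset.mem_image, Finset.mem_univ, true_and]
        constructor
        · rintro ⟨_, h1⟩
          obtain ⟨j, rfl⟩ := eq_sg_of_deg_one h1
          exact ⟨j, rfl⟩
        · rintro ⟨j, rfl⟩
          exact ⟨(hmem _).2 (Or.inr (Or.inl ⟨j, rfl⟩)), monDeg_sg j⟩
      rw [hf1, Finset.card_image_of_injective _ sg_injective]
      simp [seq3]
    · have hf2 : X.filter (fun M => monDeg M = 2) = S := by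
        ext M
        simp only [Finset.mem_filter]
        constructor
        · rintro ⟨hMX, h2⟩
          rcases (hmem M).1 hMX with rfl | ⟨j, rfl⟩ | hMS
          · rw [monDeg_zero] at h2; omega
          · rw [monDeg_sg] at h2; omega
          · exact hMS
        · intro hMS
          exact ⟨(hmem M).2 (Or.inr (Or.inr hMS)), hSdeg M hMS⟩
      rw [hf2, hScard]; simp [seq3]

end PureAux

/-- For positive integers `r` and `h₂`, the sequence `(1, r, h₂)` is a
pure O-sequence if and only if `⌈r/2⌉ ≤ h₂ ≤ C(r+1, 2)`. -/
theorem pure_socle_degree_two_iff (r h₂ : ℕ) (hr : 0 < r) (hh : 0 < h₂) :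
    IsPureOSeq (seq3 r h₂) 2 ↔ ((r + 1) / 2 ≤ h₂ ∧ h₂ ≤ Nat.choose (r + 1) 2) := by
  constructor
  · exact PureAux.forward
  · exact fun ⟨h1, h2⟩ => PureAux.backward hr hh h1 h2
end

section
/- Let M be a loopless matroid of rank 2 on a finite ground set E with |E| ≥ 3, let f_0 = |E| and let f_1 be the number of 2-element independent subsets of M. If f_1 ≥ f_0, then (1, f_0 − 2, f_1 − f_0 + 1) is a pure O-sequence. (This is the statement that the h-vector of a 1-dimensional matroid complex is a pure O-sequence, in the nondegenerate case h_2 ≥ 1.) -/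
/-!
Non-parallelism in a loopless matroid is transitive (augment `{y}` from an independent pair
`{x, z}`), so the independent pairs are the edges of a complete multipartite graph on the
ground set whose parts are the parallel classes. In such a graph with `n` vertices and
`m ≥ n` edges, a largest part `C` has size at most `n - 2`, and the degrees on `C` and off `C`
give `3n ≤ 2m + 4`; trivially `m ≤ C(n, 2)`. For `a = n - 2`, `b = m - n + 1` these read
`a ≤ 2b ≤ a(a + 1)`, and then `(1, a, b)` is a pure O-sequence: it is the h-vector of the order
ideal generated by `b` quadratic monomials in `a` variables that together involve every variable.
-/

open Finset

section PureOrderIdeal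

variable {r e : ℕ}

lemma monDeg_mono : Monotone (monDeg (r := r)) :=
  fun _ _ h => sum_le_sum fun j _ => h j

lemma eq_of_le_of_monDeg_eq {N M : Fin r → ℕ} (h : N ≤ M) (hd : monDeg N = monDeg M) :
    N = M :=
  funext ((sum_eq_sum_iff_of_le fun j _ => h j).1 hd · (mem_univ _))

lemma monDeg_eq_zero_iff {N : Fin r → ℕ} : monDeg N = 0 ↔ N = 0 := by
  simp [monDeg, funext_iff]

lemma monDeg_single (i : Fin r) : monDeg (Pi.single i 1) = 1 := by
  simp [monDeg]

lemma exists_eq_single_of_monDeg_eq_one {N : Fin r → ℕ} (h : monDeg N = 1) :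
    ∃ i, N = Pi.single i 1 := by
  obtain ⟨i, hi⟩ : ∃ i, N i ≠ 0 := by
    by_contra! h0
    simp [monDeg_eq_zero_iff.2 (funext h0)] at h
  refine ⟨i, (eq_of_le_of_monDeg_eq ?_ (by rw [h, monDeg_single])).symm⟩
  intro j
  rcases eq_or_ne j i with rfl | hj
  · simpa using Nat.one_le_iff_ne_zero.2 hi
  · simp [hj]

def downClosure (T : Finset (Fin r → ℕ)) : Finset (Fin r → ℕ) := T.biUnion Iic

variable {T : Finset (Fin r → ℕ)}

lemma mem_downClosure {N : Fin r → ℕ} : N ∈ downClosure T ↔ ∃ M ∈ T, N ≤ M := by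
  simp [downClosure]

lemma isOrderIdeal_downClosure (hT : T.Nonempty) : IsOrderIdeal (downClosure T) := by
  obtain ⟨M, hM⟩ := hT
  refine ⟨⟨M, mem_downClosure.2 ⟨M, hM, le_rfl⟩⟩, fun N hN P hP => ?_⟩
  obtain ⟨M', hM', hNM'⟩ := mem_downClosure.1 hN
  exact mem_downClosure.2 ⟨M', hM', (show P ≤ N from hP).trans hNM'⟩

lemma isPureWithSocle_downClosure (hT : T.Nonempty) (hdeg : ∀ M ∈ T, monDeg M = e) :
    IsPureWithSocle (downClosure T) e := by
  refine ⟨isOrderIdeal_downClosure hT, fun N hN => ?_, ?_, fun N ⟨hN, hmax⟩ => ?_⟩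
  · obtain ⟨M, hM, hNM⟩ := mem_downClosure.1 hN
    exact hdeg M hM ▸ monDeg_mono hNM
  · obtain ⟨M, hM⟩ := hT
    exact ⟨M, mem_downClosure.2 ⟨M, hM, le_rfl⟩, hdeg M hM⟩
  · obtain ⟨M, hM, hNM⟩ := mem_downClosure.1 hN
    rw [← hmax M (mem_downClosure.2 ⟨M, hM, le_rfl⟩) hNM]
    exact hdeg M hM

lemma filter_downClosure_monDeg_eq_zero (hT : T.Nonempty) :
    (downClosure T).filter (monDeg · = 0) = {0} := by
  ext N
  simp only [mem_filter, mem_singleton, monDeg_eq_zero_iff, and_iff_right_iff_imp]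
  rintro rfl
  obtain ⟨M, hM⟩ := hT
  exact mem_downClosure.2 ⟨M, hM, fun j => Nat.zero_le _⟩

lemma filter_downClosure_monDeg_eq_one (hcover : ∀ i, ∃ M ∈ T, 0 < M i) :
    (downClosure T).filter (monDeg · = 1) = univ.image (Pi.single · 1) := by
  ext N
  simp only [mem_filter, mem_image, mem_univ, true_and]
  constructor
  · rintro ⟨-, h⟩
    obtain ⟨i, rfl⟩ := exists_eq_single_of_monDeg_eq_one h
    exact ⟨i, rfl⟩
  · rintro ⟨i, rfl⟩
    obtain ⟨M, hM, hi⟩ := hcover i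
    refine ⟨mem_downClosure.2 ⟨M, hM, fun j => ?_⟩, monDeg_single i⟩
    rcases eq_or_ne j i with rfl | hj
    · simpa using Nat.one_le_iff_ne_zero.2 hi.ne'
    · simp [hj]

lemma filter_downClosure_monDeg_eq (hdeg : ∀ M ∈ T, monDeg M = e) :
    (downClosure T).filter (monDeg · = e) = T := by
  ext N
  simp only [mem_filter, mem_downClosure]
  constructor
  · rintro ⟨⟨M, hM, hNM⟩, hN⟩
    rwa [eq_of_le_of_monDeg_eq hNM (by rw [hN, hdeg M hM])]
  · exact fun hN => ⟨⟨N, hN, le_rfl⟩, hdeg N hN⟩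

lemma isPureOSeq_seq3_of_cover (hT : T.Nonempty) (hdeg : ∀ M ∈ T, monDeg M = 2)
    (hcover : ∀ i, ∃ M ∈ T, 0 < M i) : IsPureOSeq (seq3 r #T) 2 := by
  refine ⟨r, downClosure T, isPureWithSocle_downClosure hT hdeg, fun i hi => ?_⟩
  interval_cases i
  · simp [seq3, filter_downClosure_monDeg_eq_zero hT]
  · rw [filter_downClosure_monDeg_eq_one hcover,
      card_image_of_injective _ fun i j h => by simpa [Pi.single_apply, eq_comm] using congrFun h j]
    simp [seq3]
  · simp [seq3, filter_downClosure_monDeg_eq hdeg]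

end PureOrderIdeal

section Sym

variable {r d : ℕ}

def monomialOfSym (s : Sym (Fin r) d) : Fin r → ℕ := fun i => (s : Multiset (Fin r)).count i

lemma monomialOfSym_injective : Function.Injective (monomialOfSym (r := r) (d := d)) :=
  fun _ _ h => Sym.coe_injective (Multiset.ext.2 (congrFun h))

lemma monDeg_monomialOfSym (s : Sym (Fin r) d) : monDeg (monomialOfSym s) = d := by
  simp [monDeg, monomialOfSym]

lemma monomialOfSym_pos_iff {s : Sym (Fin r) d} {i : Fin r} :
    0 < monomialOfSym s i ↔ i ∈ s := by
  rw [monomialOfSym, Multiset.count_pos, Sym.mem_coe]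

end Sym

lemma exists_covering_finset_sym_two {a b : ℕ} (ha : 0 < a) (hab : a ≤ 2 * b)
    (hba : b ≤ (a + 1).choose 2) :
    ∃ T : Finset (Sym (Fin a) 2), #T = b ∧ ∀ i, ∃ s ∈ T, i ∈ s := by
  obtain ⟨m, rfl⟩ : ∃ m, a = m + 1 := ⟨a - 1, by omega⟩
  let pair (t : ℕ) : Sym (Fin (m + 1)) 2 :=
    Fin.clamp (2 * t) m ::ₛ Fin.clamp (2 * t + 1) m ::ₛ .nil
  let C := (range ((m + 2) / 2)).image pair
  have hC : ∀ i, ∃ s ∈ C, i ∈ s := by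
    intro i
    refine ⟨pair (i / 2), mem_image_of_mem _ (mem_range.2 (by omega)), ?_⟩
    simp only [pair, Sym.mem_cons, Fin.ext_iff, Fin.coe_clamp]
    omega
  obtain ⟨T, hCT, -, hT⟩ := exists_subsuperset_card_eq (n := b) (subset_univ C)
    (card_image_le.trans (by rw [card_range]; omega))
    (by simpa [Sym.card_sym_eq_choose] using hba)
  exact ⟨T, hT, fun i => (hC i).imp fun s hs => ⟨hCT hs.1, hs.2⟩⟩

theorem isPureOSeq_seq3 {a b : ℕ} (ha : 0 < a) (hab : a ≤ 2 * b)
    (hba : b ≤ (a + 1).choose 2) :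
    IsPureOSeq (seq3 a b) 2 := by
  obtain ⟨S, hS, hcover⟩ := exists_covering_finset_sym_two ha hab hba
  have hcard : #(S.image monomialOfSym) = b := by
    rw [card_image_of_injective _ monomialOfSym_injective, hS]
  rw [← hcard]
  refine isPureOSeq_seq3_of_cover (card_pos.1 (by omega)) ?_ fun i => ?_
  · simp [monDeg_monomialOfSym]
  · obtain ⟨s, hs, hi⟩ := hcover i
    exact ⟨_, mem_image_of_mem _ hs, monomialOfSym_pos_iff.2 hi⟩

namespace SimpleGraph

variable {V : Type*} [Fintype V] {G : SimpleGraph V} [DecidableRel G.Adj]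

variable (G) in
/-- For a complete multipartite graph, the part containing `v`. -/
def nonadjFinset (v : V) : Finset V := {w | ¬ G.Adj v w}

lemma mem_nonadjFinset {v w : V} : w ∈ G.nonadjFinset v ↔ ¬ G.Adj v w := by
  simp [nonadjFinset]

lemma degree_add_card_nonadjFinset (v : V) :
    G.degree v + #(G.nonadjFinset v) = Fintype.card V := by
  rw [← card_neighborFinset_eq_degree, neighborFinset_eq_filter, nonadjFinset,
    card_filter_add_card_filter_not, card_univ]

lemma IsCompleteMultipartite.nonadjFinset_eq (h : G.IsCompleteMultipartite) {v w : V}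
    (hvw : ¬ G.Adj v w) : G.nonadjFinset w = G.nonadjFinset v := by
  ext u
  simp only [mem_nonadjFinset]
  exact ⟨h.trans _ _ _ hvw, h.trans _ _ _ (fun h' => hvw h'.symm)⟩

lemma IsCompleteMultipartite.disjoint_nonadjFinset (h : G.IsCompleteMultipartite) {v w : V}
    (hvw : G.Adj v w) : Disjoint (G.nonadjFinset v) (G.nonadjFinset w) :=
  Finset.disjoint_left.2 fun _ hv hw =>
    h.trans _ _ _ (mem_nonadjFinset.1 hv) (fun h' => mem_nonadjFinset.1 hw h'.symm) hvw

theorem IsCompleteMultipartite.three_mul_card_le [DecidableEq V]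
    (h : G.IsCompleteMultipartite) (hE : Fintype.card V ≤ #G.edgeFinset) :
    3 * Fintype.card V ≤ 2 * #G.edgeFinset + 4 := by
  rcases isEmpty_or_nonempty V with hV | hV
  · simp
  obtain ⟨v₀, -, hmax⟩ := exists_max_image univ (fun v => #(G.nonadjFinset v)) univ_nonempty
  obtain ⟨n, hn⟩ : ∃ n, Fintype.card V = n := ⟨_, rfl⟩
  obtain ⟨C, hC⟩ : ∃ C, G.nonadjFinset v₀ = C := ⟨_, rfl⟩
  have hpos v : 0 < #(G.nonadjFinset v) := card_pos.2 ⟨v, mem_nonadjFinset.2 G.irrefl⟩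
  have hdeg v : G.degree v + #(G.nonadjFinset v) = n := hn ▸ G.degree_add_card_nonadjFinset v
  have hCn : #C ≤ n := hn ▸ card_le_univ C
  -- on the part `C` every degree is `n - #C`; off it, a part is both at most `#C` and inside `Cᶜ`
  have hin : ∑ v ∈ C, G.degree v = #C * (n - #C) := by
    refine sum_const_nat fun v hv => ?_
    have := hdeg v
    rw [h.nonadjFinset_eq (mem_nonadjFinset.1 (hC ▸ hv)), hC] at this
    omega
  have hout v (hv : v ∈ Cᶜ) : max #C (n - #C) ≤ G.degree v ∧ G.degree v < n := by
    have hadj : G.Adj v₀ v := by simpa [← hC, mem_nonadjFinset] using hv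
    have hunion : #C + #(G.nonadjFinset v) ≤ n := by
      rw [← hC, ← card_union_of_disjoint (h.disjoint_nonadjFinset hadj), ← hn]
      exact card_le_univ _
    have := hmax v (mem_univ v)
    have := hdeg v
    have := hpos v
    rw [hC] at *
    omega
  have hsum : 2 * #G.edgeFinset = #C * (n - #C) + ∑ v ∈ Cᶜ, G.degree v := by
    rw [← sum_degrees_eq_twice_card_edges, ← sum_add_sum_compl C, hin]
  have hlow := card_nsmul_le_sum Cᶜ _ _ fun v hv => (hout v hv).1
  have hup := sum_le_card_nsmul Cᶜ _ _ fun v hv => Nat.le_sub_one_of_lt (hout v hv).2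
  rw [card_compl, smul_eq_mul, hn] at hlow hup
  have hC0 : 0 < #C := hC ▸ hpos v₀
  rw [hn] at hE ⊢
  generalize ∑ v ∈ Cᶜ, G.degree v = σ at hsum hlow hup
  generalize #C = c at *
  obtain ⟨k, rfl⟩ : ∃ k, n = c + k := ⟨n - c, by omega⟩
  rw [Nat.add_sub_cancel_left] at hsum hlow hup
  rcases lt_or_ge k 3 with hk | hk
  · interval_cases k <;> omega
  · nlinarith [le_max_right c k]

end SimpleGraph

namespace Matroid

variable {α : Type*} {M : Matroid α}

variable (M) in
def indepGraph : SimpleGraph M.E where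
  Adj x y := x ≠ y ∧ M.Indep {(x : α), (y : α)}
  symm := ⟨fun _ _ h => ⟨h.1.symm, Set.pair_comm (α := α) _ _ ▸ h.2⟩⟩
  loopless := ⟨fun _ h => h.1 rfl⟩

lemma indepGraph_adj {x y : M.E} :
    M.indepGraph.Adj x y ↔ x ≠ y ∧ M.Indep {(x : α), (y : α)} :=
  Iff.rfl

lemma isCompleteMultipartite_indepGraph [M.Loopless] : M.indepGraph.IsCompleteMultipartite := by
  refine ⟨fun x y z hxy hyz hxz => ?_⟩
  obtain ⟨hxz, hI⟩ := indepGraph_adj.1 hxz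
  -- augmenting `{y}` from `{x, z}` makes `{x, y}` or `{y, z}` independent
  have hxz' : (x : α) ≠ z := Subtype.coe_injective.ne hxz
  obtain ⟨e, ⟨he, hey⟩, heI⟩ := (M.isNonloop_of_loopless y.2).indep.augment hI
    (by rw [Set.encard_singleton, Set.encard_pair hxz']; norm_num)
  obtain rfl | rfl := he
  · exact hxy ⟨fun h => hey (h ▸ rfl), heI⟩
  · exact hyz ⟨fun h => hey (h ▸ rfl), Set.pair_comm (α := α) _ _ ▸ heI⟩

lemma ncard_indep_pairs_eq_ncard_edgeSet :
    {S : Set α | M.Indep S ∧ S.ncard = 2}.ncard = M.indepGraph.edgeSet.ncard := by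
  let φ : Sym2 M.E → Set α :=
    Sym2.lift ⟨fun x y => {(x : α), (y : α)}, fun _ _ => Set.pair_comm _ _⟩
  have himage : {S : Set α | M.Indep S ∧ S.ncard = 2} = φ '' M.indepGraph.edgeSet := by
    ext S
    constructor
    · rintro ⟨hI, hS⟩
      obtain ⟨x, y, hxy, rfl⟩ := Set.ncard_eq_two.1 hS
      have hx : x ∈ M.E := hI.subset_ground (by simp)
      have hy : y ∈ M.E := hI.subset_ground (by simp)
      exact ⟨s(⟨x, hx⟩, ⟨y, hy⟩), ⟨fun h => hxy (congrArg Subtype.val h), hI⟩, rfl⟩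
    · rintro ⟨e, he, rfl⟩
      induction e using Sym2.ind with
      | h x y =>
        obtain ⟨hxy, hI⟩ := he
        exact ⟨hI, Set.ncard_pair (Subtype.coe_injective.ne hxy)⟩
  rw [himage, Set.InjOn.ncard_image]
  intro e _ e' _ h
  induction e using Sym2.ind
  induction e' using Sym2.ind
  simpa [φ, Set.pair_eq_pair_iff, Subtype.ext_iff] using h

end Matroid

theorem matroid_rank_two_hvector_is_pure_general {α : Type*} (M : Matroid α)
    (hcard : 3 ≤ M.E.ncard)
    (hloopless : ∀ x ∈ M.E, M.Indep {x})
    (f₀ f₁ : ℕ) (hf₀ : f₀ = M.E.ncard)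
    (hf₁ : f₁ = {S : Set α | M.Indep S ∧ S.ncard = 2}.ncard)
    (hf : f₀ ≤ f₁) :
    IsPureOSeq (seq3 (f₀ - 2) (f₁ - f₀ + 1)) 2 := by
  classical
  have : Fintype M.E := (Set.finite_of_ncard_pos (by omega)).fintype
  have : M.Loopless :=
    Matroid.loopless_iff_forall_isNonloop.2 fun x hx => Matroid.indep_singleton.1 (hloopless x hx)
  have hn : f₀ = Fintype.card M.E := by
    rw [hf₀, ← Nat.card_coe_set_eq, Nat.card_eq_fintype_card]
  have hm : f₁ = #M.indepGraph.edgeFinset := by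
    rw [hf₁, Matroid.ncard_indep_pairs_eq_ncard_edgeSet, ← SimpleGraph.coe_edgeFinset,
      Set.ncard_coe_finset]
  have hlow := Matroid.isCompleteMultipartite_indepGraph.three_mul_card_le (hn ▸ hm ▸ hf)
  have hup := M.indepGraph.card_edgeFinset_le_card_choose_two
  rw [← hn, ← hm] at hlow hup
  obtain ⟨m, rfl⟩ : ∃ m, f₀ = m + 1 := ⟨f₀ - 1, by omega⟩
  rw [show (m + 1).choose 2 = m + m.choose 2 by simp [Nat.choose_succ_succ']] at hup
  exact isPureOSeq_seq3 (by omega) (by omega) (by rw [show m + 1 - 2 + 1 = m by omega]; omega)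

/-- (Stanley's conjecture for rank-2 matroids.) Let `M` be a loopless
matroid of rank 2 on a finite ground set with at least 3 elements, with `f₀` elements
and `f₁` two-element independent sets.  If `f₁ ≥ f₀`, then `(1, f₀ − 2, f₁ − f₀ + 1)`
is a pure O-sequence. -/
theorem matroid_rank_two_hvector_is_pure {α : Type*} (M : Matroid α)
    (hfin : M.E.Finite) (hcard : 3 ≤ M.E.ncard)
    (hloopless : ∀ x ∈ M.E, M.Indep {x})
    (hrank : ∀ B : Set α, M.IsBase B → B.ncard = 2)
    (f₀ f₁ : ℕ) (hf₀ : f₀ = M.E.ncard)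
    (hf₁ : f₁ = {S : Set α | M.Indep S ∧ S.ncard = 2}.ncard)
    (hf : f₀ ≤ f₁) :
    IsPureOSeq (seq3 (f₀ - 2) (f₁ - f₀ + 1)) 2 :=
  matroid_rank_two_hvector_is_pure_general M hcard hloopless f₀ f₁ hf₀ hf₁ hf
end

section
/- Let p ≥ q ≥ 0 and n ≥ 1 be integers, and let N be the n × n integer matrix with entries N_{ij} = C(p, q − i + j) for 1 ≤ i, j ≤ n. Then N is nonsingular (det N ≠ 0), and its determinant satisfies det N · H(p) · H(p − q + n) · H(q + n) = H(n) · H(p + n) · H(p − q) · H(q). -/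
/-!
Multiplying row `i` of `N` by `(q + n - 1 - i)! (p - q + i)!` turns the entry `C(p, q + j - i)`
into `p! P_j(i)`, where `P_j(x) = (q + n - 1 - x)^{(n-1-j)} (x + p - q)^{(j)}` (falling factorials)
has degree `< n`. A matrix `(P_j(x_i))` is the Vandermonde matrix of `x` times the coefficient
matrix of the `P_j`, so its determinant does not change when all nodes are translated by `q`;
at the nodes `q + i` it is upper triangular with diagonal `(n - 1 - i)! (p + i)! / p!`.
Collecting the factorials into hyperfactorials gives the formula, whose right-hand side is nonzero.
-/

def hyperfactorial (m : ℕ) : ℕ := ∏ i ∈ Finset.range m, Nat.factorial i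

open Finset Polynomial Matrix
open scoped Nat

namespace Matrix

variable {R : Type*} [CommRing R] {n : ℕ}

theorem of_eval_eq_vandermonde_mul_of_coeff (P : Fin n → R[X])
    (hP : ∀ j, (P j).natDegree < n) (v : Fin n → R) :
    of (fun i j => (P j).eval (v i)) = vandermonde v * of (fun (k j : Fin n) => (P j).coeff k) := by
  ext i j
  rw [mul_apply, of_apply, eval_eq_sum_range' (hP j), ← Fin.sum_univ_eq_sum_range]
  exact sum_congr rfl fun k _ => mul_comm _ _

theorem det_of_eval_add (P : Fin n → R[X]) (hP : ∀ j, (P j).natDegree < n)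
    (v : Fin n → R) (a : R) :
    (of fun i j => (P j).eval (v i + a)).det = (of fun i j => (P j).eval (v i)).det := by
  rw [of_eval_eq_vandermonde_mul_of_coeff P hP, of_eval_eq_vandermonde_mul_of_coeff P hP,
    det_mul, det_mul, det_vandermonde_add]

end Matrix

theorem Nat.choose_mul_factorial_add_mul_factorial_add {p m : ℕ} (hm : m ≤ p) (k l : ℕ) :
    p.choose m * (m + k)! * (p - m + l)! =
      p ! * (m + k).descFactorial k * (p - m + l).descFactorial l := by
  rw [← Nat.factorial_mul_descFactorial (Nat.le_add_left k m),
    ← Nat.factorial_mul_descFactorial (Nat.le_add_left l (p - m)), Nat.add_sub_cancel,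
    Nat.add_sub_cancel, ← Nat.choose_mul_factorial_mul_factorial hm]
  ring

theorem hyperfactorial_ne_zero (m : ℕ) : hyperfactorial m ≠ 0 :=
  prod_ne_zero_iff.2 fun i _ => Nat.factorial_ne_zero i

theorem hyperfactorial_add (a n : ℕ) :
    hyperfactorial (a + n) = hyperfactorial a * ∏ i ∈ range n, (a + i)! :=
  prod_range_add _ a n

theorem prod_fin_factorial_rev (a n : ℕ) :
    ∏ i : Fin n, (a + n - 1 - i)! = ∏ i ∈ range n, (a + i)! := by
  rw [Fin.prod_univ_eq_prod_range (fun i => (a + n - 1 - i)!), ← prod_range_reflect]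
  exact prod_congr rfl fun i hi => by rw [mem_range] at hi; congr 2; omega

section BinomialPolynomial

variable (p q n : ℕ)

noncomputable def binomPoly (j : ℕ) : ℤ[X] :=
  (descPochhammer ℤ (n - 1 - j)).comp (C ((q + n - 1 : ℕ) : ℤ) - X) *
    (descPochhammer ℤ j).comp (X + C ((p - q : ℕ) : ℤ))

variable {p q n}

theorem natDegree_binomPoly_lt {j : ℕ} (hj : j < n) : (binomPoly p q n j).natDegree < n := by
  have hcomp : ∀ (k : ℕ) (r : ℤ[X]), r.natDegree ≤ 1 →
      ((descPochhammer ℤ k).comp r).natDegree ≤ k := fun k r hr =>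
    natDegree_comp_le.trans (by simpa [descPochhammer_natDegree] using Nat.mul_le_mul_left k hr)
  refine (natDegree_mul_le.trans (add_le_add (hcomp _ _ ?_) (hcomp _ _ ?_))).trans_lt (by omega)
  all_goals compute_degree

theorem binomPoly_eval_natCast (j : ℕ) {x : ℕ} (hx : x ≤ q + n - 1) :
    (binomPoly p q n j).eval (x : ℤ) =
      ((q + n - 1 - x).descFactorial (n - 1 - j) * (p - q + x).descFactorial j : ℤ) := by
  rw [binomPoly, eval_mul, eval_comp, eval_comp, eval_sub, eval_add, eval_C, eval_C, eval_X,
    ← Nat.cast_sub hx, ← Nat.cast_add, add_comm x, descPochhammer_eval_eq_descFactorial,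
    descPochhammer_eval_eq_descFactorial]

theorem ite_choose_mul_factorial_mul_factorial (hpq : q ≤ p) {i j : ℕ}
    (hi : i < n) (hj : j < n) :
    (if i ≤ q + j then p.choose (q + j - i) else 0) * (q + n - 1 - i)! * (p - q + i)! =
      p ! * (q + n - 1 - i).descFactorial (n - 1 - j) * (p - q + i).descFactorial j := by
  by_cases hij : i ≤ q + j
  · rw [if_pos hij]
    by_cases hm : q + j - i ≤ p
    · have := Nat.choose_mul_factorial_add_mul_factorial_add hm (n - 1 - j) j
      rwa [show q + j - i + (n - 1 - j) = q + n - 1 - i by omega,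
        show p - (q + j - i) + j = p - q + i by omega] at this
    · rw [Nat.choose_eq_zero_of_lt (by omega),
        Nat.descFactorial_eq_zero_iff_lt.2 (show p - q + i < j by omega)]
      simp
  · rw [if_neg hij, Nat.descFactorial_eq_zero_iff_lt.2 (show q + n - 1 - i < n - 1 - j by omega)]
    simp

end BinomialPolynomial

def binomialMatrix (p q n : ℕ) : Matrix (Fin n) (Fin n) ℤ :=
  of fun i j => if (i : ℕ) ≤ q + j then (p.choose (q + j - i) : ℤ) else 0

section Determinant

variable {p q n : ℕ}

theorem diagonal_mul_binomialMatrix (hpq : q ≤ p) :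
    diagonal (fun i : Fin n => ((q + n - 1 - i)! * (p - q + i)! : ℤ)) * binomialMatrix p q n =
      (p ! : ℤ) • of fun i j : Fin n => (binomPoly p q n j).eval (i : ℤ) := by
  ext i j
  have key := ite_choose_mul_factorial_mul_factorial hpq i.isLt j.isLt
  rw [diagonal_mul, Matrix.smul_apply, of_apply, binomPoly_eval_natCast j (by omega),
    binomialMatrix, of_apply, smul_eq_mul]
  split_ifs at key ⊢ <;> zify at key <;> linear_combination key

theorem det_of_binomPoly_eval (hpq : q ≤ p) :
    (of fun i j : Fin n => (binomPoly p q n j).eval (i : ℤ)).det =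
      ∏ i : Fin n, ((n - 1 - i)! * (p + i).descFactorial i : ℤ) := by
  have hshift : ∀ i j : Fin n, (binomPoly p q n j).eval ((i : ℤ) + q) =
      ((n - 1 - i).descFactorial (n - 1 - j) * (p + i).descFactorial j : ℤ) := fun i j => by
    rw [← Nat.cast_add, binomPoly_eval_natCast j (by omega),
      show q + n - 1 - (i + q) = n - 1 - i by omega, show p - q + (i + q) = p + i by omega]
  rw [← det_of_eval_add _ (fun j => natDegree_binomPoly_lt j.isLt) _ (q : ℤ),
    det_of_isUpperTriangular]
  · refine prod_congr rfl fun i _ => ?_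
    rw [of_apply, hshift, Nat.descFactorial_self]
  · intro i j (hji : j < i)
    rw [of_apply, hshift, Nat.descFactorial_eq_zero_iff_lt.2 (show n - 1 - i < n - 1 - j by omega)]
    simp

theorem det_binomialMatrix_mul_prod_factorial (hpq : q ≤ p) :
    (binomialMatrix p q n).det * (∏ i ∈ range n, (q + i)! : ℕ) *
        (∏ i ∈ range n, (p - q + i)! : ℕ) =
      (hyperfactorial n * ∏ i ∈ range n, (p + i)! : ℕ) := by
  have h := congrArg det (diagonal_mul_binomialMatrix (n := n) hpq)
  rw [det_mul, det_diagonal, det_smul, det_of_binomPoly_eval hpq, Fintype.card_fin] at h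
  have hfac : ∀ i : Fin n, p ! * (p + i).descFactorial i = (p + i)! := fun i => by
    simpa using Nat.factorial_mul_descFactorial (Nat.le_add_left (i : ℕ) p)
  have hrhs : (p ! : ℤ) ^ n * ∏ i : Fin n, ((n - 1 - i)! * (p + i).descFactorial i : ℤ) =
      (∏ i : Fin n, ((n - 1 - i)! : ℤ)) * ∏ i : Fin n, ((p + i)! : ℤ) := by
    rw [← Fin.prod_const, ← prod_mul_distrib, ← prod_mul_distrib]
    refine prod_congr rfl fun i _ => ?_
    rw [← hfac i]
    push_cast
    ring
  have hrev := prod_fin_factorial_rev 0 n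
  simp only [zero_add] at hrev
  rw [hyperfactorial, ← hrev, ← prod_fin_factorial_rev,
    ← Fin.prod_univ_eq_prod_range (fun i => (p - q + i)!),
    ← Fin.prod_univ_eq_prod_range (fun i => (p + i)!)]
  push_cast
  rw [prod_mul_distrib, hrhs] at h
  linear_combination h

theorem det_binomialMatrix_mul_hyperfactorial (hpq : q ≤ p) :
    (binomialMatrix p q n).det * (hyperfactorial p : ℤ) * (hyperfactorial (p - q + n) : ℤ) *
        (hyperfactorial (q + n) : ℤ) =
      (hyperfactorial n : ℤ) * (hyperfactorial (p + n) : ℤ) *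
        (hyperfactorial (p - q) : ℤ) * (hyperfactorial q : ℤ) := by
  have key := det_binomialMatrix_mul_prod_factorial (n := n) hpq
  rw [hyperfactorial_add (p - q), hyperfactorial_add q, hyperfactorial_add p]
  push_cast at key ⊢
  linear_combination (hyperfactorial p * hyperfactorial (p - q) * hyperfactorial q : ℤ) * key

end Determinant

theorem binomial_matrix_det_general (p q n : ℕ) (hpq : q ≤ p)
    (N : Matrix (Fin n) (Fin n) ℤ)
    (hN : ∀ i j : Fin n, N i j =
      if (i : ℕ) ≤ q + (j : ℕ) then (Nat.choose p (q + (j : ℕ) - (i : ℕ)) : ℤ) else 0) :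
    N.det ≠ 0 ∧
      N.det * (hyperfactorial p : ℤ) * (hyperfactorial (p - q + n) : ℤ) *
          (hyperfactorial (q + n) : ℤ) =
        (hyperfactorial n : ℤ) * (hyperfactorial (p + n) : ℤ) *
          (hyperfactorial (p - q) : ℤ) * (hyperfactorial q : ℤ) := by
  obtain rfl : N = binomialMatrix p q n := Matrix.ext hN
  have hdet := det_binomialMatrix_mul_hyperfactorial (n := n) hpq
  refine ⟨fun h0 => ?_, hdet⟩
  simp [h0, hyperfactorial_ne_zero] at hdet

/-- For integers `p ≥ q ≥ 0` and `n ≥ 1`, the `n × n` matrix with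
entries `C(p, q − i + j)` (for `1 ≤ i, j ≤ n`, with `C(p, m) = 0` for `m < 0`) is
nonsingular, and its determinant satisfies
`det N · H(p) · H(p−q+n) · H(q+n) = H(n) · H(p+n) · H(p−q) · H(q)`. -/
theorem binomial_matrix_det (p q n : ℕ) (hpq : q ≤ p) (hn : 1 ≤ n)
    (N : Matrix (Fin n) (Fin n) ℤ)
    (hN : ∀ i j : Fin n, N i j =
      if (i : ℕ) ≤ q + (j : ℕ) then (Nat.choose p (q + (j : ℕ) - (i : ℕ)) : ℤ) else 0) :
    N.det ≠ 0 ∧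
      N.det * (hyperfactorial p : ℤ) * (hyperfactorial (p - q + n) : ℤ) *
          (hyperfactorial (q + n) : ℤ) =
        (hyperfactorial n : ℤ) * (hyperfactorial (p + n) : ℤ) *
          (hyperfactorial (p - q) : ℤ) * (hyperfactorial q : ℤ) :=
  binomial_matrix_det_general p q n hpq N hN
end

section
/- Every pure O-sequence of type 2 in three variables is unimodal; that is, the h-vector of any pure monomial order ideal in at most three variables having exactly two maximal monomials is unimodal. -/
/-!
Every monomial of `X` divides one of its two maximal monomials `A ≠ B`, so `X = Iic A ∪ Iic B`
and, by inclusion–exclusion, `h = h(Iic A) + h(Iic B) - h(Iic (A ⊓ B))`. The h-vector of a box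
`Iic (p, q, m)` has first difference `T(i + 1) - T(i - m)`, where `T = trapezoid p q` counts the
lattice points of `[0, p] × [0, q]` on the line `u + v = k`. With at most three variables, after
exchanging `A` and `B`, renaming the variables and padding with zero exponents, we may assume
`B ≤ A` in every exponent but the last, where `m = A 2 ≤ B 2 = m'`. Then
`Δh(i) = (T(i + 1) - T(i - m)) + (T'(i - m) - T'(i - m'))` with `T' = trapezoid (B 0) (B 1)`:
this is `≥ 0` while `2i < e`, `≤ 0` once `2i > e + m`, and nonincreasing in between. Hence once
`h` drops it never rises again, which gives unimodality.
-/

open Finset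

lemma Finset.Iic_inter_Iic {α : Type*} [Lattice α] [LocallyFiniteOrderBot α] [DecidableEq α]
    (a b : α) : Iic a ∩ Iic b = Iic (a ⊓ b) := by
  ext
  simp

def hVector {r : ℕ} (Y : Finset (Fin r → ℕ)) (i : ℕ) : ℕ := #{M ∈ Y | monDeg M = i}

lemma hVector_union_add_hVector_inter {r : ℕ} (Y Z : Finset (Fin r → ℕ)) (i : ℕ) :
    hVector (Y ∪ Z) i + hVector (Y ∩ Z) i = hVector Y i + hVector Z i := by
  simp only [hVector, filter_union, filter_inter_distrib, card_union_add_card_inter]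

lemma monDeg_strictMono {r : ℕ} : StrictMono (monDeg : (Fin r → ℕ) → ℕ) := fun _ _ h =>
  sum_lt_sum (fun j _ => h.le j) (by simpa using (Pi.lt_def.1 h).2)

lemma isMaxMon_iff_maximal {r : ℕ} {X : Finset (Fin r → ℕ)} {M : Fin r → ℕ} :
    IsMaxMon X M ↔ Maximal (· ∈ X) M :=
  and_congr_right fun _ => forall₂_congr fun _ _ =>
    ⟨fun h hMN => (h hMN).le, fun h hMN => (h hMN).antisymm hMN⟩

lemma IsPureWithSocle.exists_eq_Iic_union_Iic {r e : ℕ} {X : Finset (Fin r → ℕ)}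
    (hpure : IsPureWithSocle X e) (htype : {M : Fin r → ℕ | IsMaxMon X M}.ncard = 2) :
    ∃ A B, A ≠ B ∧ monDeg A = e ∧ monDeg B = e ∧ X = Iic A ∪ Iic B := by
  obtain ⟨A, B, hAB, hmax⟩ := Set.ncard_eq_two.1 htype
  have hA : IsMaxMon X A := (Set.ext_iff.1 hmax A).2 (Set.mem_insert _ _)
  have hB : IsMaxMon X B := (Set.ext_iff.1 hmax B).2 (Set.mem_insert_of_mem _ rfl)
  refine ⟨A, B, hAB, hpure.2.2.2 A hA, hpure.2.2.2 B hB, ?_⟩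
  ext M
  simp only [mem_union, mem_Iic]
  constructor
  · intro hM
    obtain ⟨N, hMN, hN⟩ := X.exists_le_maximal hM
    rcases (Set.ext_iff.1 hmax N).1 (isMaxMon_iff_maximal.2 hN) with rfl | rfl
    exacts [Or.inl hMN, Or.inr hMN]
  · rintro (hM | hM)
    exacts [hpure.1.2 A hA.1 M hM, hpure.1.2 B hB.1 M hM]

lemma exists_unimodal_of_no_valley (h : ℕ → ℕ) (e : ℕ)
    (hnv : ∀ i i', i < i' → i' < e → h (i + 1) < h i → h (i' + 1) ≤ h i') :
    ∃ j ≤ e, (∀ i, i < j → h i ≤ h (i + 1)) ∧ ∀ i, j ≤ i → i < e → h (i + 1) ≤ h i := by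
  classical
  by_cases H : ∃ i, i < e ∧ h (i + 1) < h i
  · refine ⟨Nat.find H, (Nat.find_spec H).1.le, fun i hi => ?_, fun i hi hie => ?_⟩
    · exact not_lt.1 fun hlt => Nat.find_min H hi ⟨hi.trans (Nat.find_spec H).1, hlt⟩
    · rcases hi.eq_or_lt with rfl | hlt
      exacts [(Nat.find_spec H).2.le, hnv _ i hlt hie (Nat.find_spec H).2]
  · push Not at H
    exact ⟨e, le_rfl, H, fun i hi hie => absurd hie (not_lt.2 hi)⟩

def trapezoid (p q : ℕ) (k : ℤ) : ℤ :=
  max 0 (min (min (k + 1) (p + 1)) (min (q + 1) (p + q + 1 - k)))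

section Trapezoid

variable {p q : ℕ} {x y : ℤ}

lemma trapezoid_le_trapezoid_of_add_le (hxy : x ≤ y) (h : x + y ≤ p + q) :
    trapezoid p q x ≤ trapezoid p q y := by
  simp only [trapezoid]; omega

lemma trapezoid_le_trapezoid_of_le_add (hxy : x ≤ y) (h : p + q ≤ x + y) :
    trapezoid p q y ≤ trapezoid p q x := by
  simp only [trapezoid]; omega

lemma trapezoid_sub_trapezoid_sub_one (p q : ℕ) (k : ℤ) :
    trapezoid p q k - trapezoid p q (k - 1) =
      (if 0 ≤ k ∧ k ≤ min p q then 1 else 0) -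
        (if max p q < k ∧ k ≤ p + q + 1 then 1 else 0) := by
  simp only [trapezoid]; split_ifs <;> omega

lemma card_filter_add_eq_trapezoid (p q : ℕ) (k : ℤ) :
    (#{x ∈ range (p + 1) ×ˢ range (q + 1) | (x.1 + x.2 : ℤ) = k} : ℤ) = trapezoid p q k := by
  rcases lt_or_ge k 0 with hk | hk
  · rw [card_eq_zero.2 (filter_eq_empty_iff.2 fun x _ => by omega)]
    simp only [trapezoid]; omega
  obtain ⟨n, rfl⟩ := Int.eq_ofNat_of_zero_le hk
  have : #{x ∈ range (p + 1) ×ˢ range (q + 1) | (x.1 + x.2 : ℤ) = n} =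
      #(Icc (n - q) (min p n)) := by
    refine card_nbij' Prod.fst (fun u => (u, n - u)) ?_ ?_ ?_ ?_ <;>
      simp +contextual only [coe_filter, mem_product, mem_range, Set.MapsTo, Set.LeftInvOn,
        Set.mem_ofPred_eq, coe_Icc, Set.mem_Icc, Prod.forall, Prod.mk.injEq, true_and,
        implies_true] <;> intros <;> omega
  rw [this, Nat.card_Icc]
  simp only [trapezoid]; omega

end Trapezoid

def unionBoxDiff (p q m p' q' m' i : ℕ) : ℤ :=
  trapezoid p q (i + 1) - trapezoid p q (i - m) + trapezoid p' q' (i - m) -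
    trapezoid p' q' (i - m')

section UnionBoxDiff

variable {p q m p' q' m' : ℕ}

lemma unionBoxDiff_nonneg (hm : m ≤ m') (hdeg : p + q + m = p' + q' + m') {i : ℕ}
    (hi : 2 * i < p + q + m) : 0 ≤ unionBoxDiff p q m p' q' m' i := by
  have h₁ : trapezoid p q (i - m) ≤ trapezoid p q (i + 1) :=
    trapezoid_le_trapezoid_of_add_le (by omega) (by omega)
  have h₂ : trapezoid p' q' (i - m') ≤ trapezoid p' q' (i - m) :=
    trapezoid_le_trapezoid_of_add_le (by omega) (by omega)
  simp only [unionBoxDiff]; omega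

lemma unionBoxDiff_nonpos (hm : m ≤ m') (hdeg : p + q + m = p' + q' + m') {i : ℕ}
    (hi : p + q + m + m < 2 * i) : unionBoxDiff p q m p' q' m' i ≤ 0 := by
  have h₁ : trapezoid p q (i + 1) ≤ trapezoid p q (i - m) :=
    trapezoid_le_trapezoid_of_le_add (by omega) (by omega)
  have h₂ : trapezoid p' q' (i - m) ≤ trapezoid p' q' (i - m') :=
    trapezoid_le_trapezoid_of_le_add (by omega) (by omega)
  simp only [unionBoxDiff]; omega

lemma unionBoxDiff_succ_le (hp : p' ≤ p) (hq : q' ≤ q) (hm : m ≤ m')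
    (hdeg : p + q + m = p' + q' + m') {i : ℕ} (hi₁ : p + q + m ≤ 2 * i)
    (hi₂ : 2 * i + 2 ≤ p + q + m + m) :
    unionBoxDiff p q m p' q' m' (i + 1) ≤ unionBoxDiff p q m p' q' m' i := by
  have h₁ := trapezoid_sub_trapezoid_sub_one p q (i + 1 + 1)
  have h₂ := trapezoid_sub_trapezoid_sub_one p q ((i + 1 : ℕ) - m)
  have h₃ := trapezoid_sub_trapezoid_sub_one p' q' ((i + 1 : ℕ) - m)
  have h₄ := trapezoid_sub_trapezoid_sub_one p' q' ((i + 1 : ℕ) - m')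
  simp only [unionBoxDiff] at *
  push_cast at *
  rw [add_sub_cancel_right] at h₁
  rw [show (i : ℤ) + 1 - m - 1 = i - m by ring] at h₂ h₃
  rw [show (i : ℤ) + 1 - m' - 1 = i - m' by ring] at h₄
  split_ifs at h₁ h₂ h₃ h₄ <;> omega

lemma unionBoxDiff_nonpos_of_neg (hp : p' ≤ p) (hq : q' ≤ q) (hm : m ≤ m')
    (hdeg : p + q + m = p' + q' + m') {i i' : ℕ} (hii' : i < i')
    (hneg : unionBoxDiff p q m p' q' m' i < 0) : unionBoxDiff p q m p' q' m' i' ≤ 0 := by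
  have hi : p + q + m ≤ 2 * i := by
    by_contra! hi
    exact (unionBoxDiff_nonneg hm hdeg hi).not_gt hneg
  rcases lt_or_ge (p + q + m + m) (2 * i') with hi' | hi'
  · exact unionBoxDiff_nonpos hm hdeg hi'
  suffices ∀ k, i ≤ k → 2 * k ≤ p + q + m + m →
      unionBoxDiff p q m p' q' m' k ≤ unionBoxDiff p q m p' q' m' i from
    (this i' hii'.le hi').trans hneg.le
  intro k hik
  induction k, hik using Nat.le_induction with
  | base => exact fun _ => le_rfl
  | succ k hik ih =>
    exact fun hk => (unionBoxDiff_succ_le hp hq hm hdeg (by omega) (by omega)).trans (ih (by omega))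

end UnionBoxDiff

lemma natCast_hVector_Iic_eq_sum (D : Fin 3 → ℕ) (i : ℕ) :
    (hVector (Iic D) i : ℤ) = ∑ w ∈ range (D 2 + 1), trapezoid (D 0) (D 1) (i - w) := by
  have mem_iff {M : Fin 3 → ℕ} : M ∈ Iic D ↔ M 0 ≤ D 0 ∧ M 1 ≤ D 1 ∧ M 2 ≤ D 2 := by
    simp [Pi.le_def, Fin.forall_fin_succ]
  rw [hVector, card_eq_sum_card_fiberwise (f := fun M => M 2) (t := range (D 2 + 1))]
  · push_cast
    refine sum_congr rfl fun w hw => ?_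
    rw [← card_filter_add_eq_trapezoid, filter_filter]
    congr 1
    have hw := mem_range.1 hw
    refine card_nbij' (fun M => (M 0, M 1)) (fun x => ![x.1, x.2, w]) ?_ ?_ ?_ fun _ _ => rfl
    · intro M
      simp only [coe_filter, Set.mem_ofPred_eq, mem_product, mem_range, mem_iff, monDeg,
        Fin.sum_univ_three]
      omega
    · rintro ⟨a, b⟩
      simp only [coe_filter, Set.mem_ofPred_eq, mem_product, mem_range, mem_iff, monDeg,
        Fin.sum_univ_three, Matrix.cons_val_zero, Matrix.cons_val_one, Matrix.cons_val, and_true]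
      omega
    · intro M hM
      simp only [coe_filter, Set.mem_ofPred_eq] at hM
      ext j
      fin_cases j <;> simp [hM.2.2]
  · intro M hM
    simp only [coe_filter, mem_iff, Set.mem_ofPred_eq, coe_range, Set.mem_Iio] at hM ⊢
    omega

lemma natCast_hVector_Iic_succ_sub (D : Fin 3 → ℕ) (i : ℕ) :
    (hVector (Iic D) (i + 1) : ℤ) - hVector (Iic D) i =
      trapezoid (D 0) (D 1) (i + 1) - trapezoid (D 0) (D 1) (i - D 2) := by
  rw [natCast_hVector_Iic_eq_sum, natCast_hVector_Iic_eq_sum, sum_range_succ', sum_range_succ]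
  simp only [Nat.cast_add, Nat.cast_one, CharP.cast_eq_zero, sub_zero]
  ring_nf

lemma natCast_hVector_union_succ_sub {A B : Fin 3 → ℕ} (h₀ : B 0 ≤ A 0) (h₁ : B 1 ≤ A 1)
    (h₂ : A 2 ≤ B 2) (i : ℕ) :
    (hVector (Iic A ∪ Iic B) (i + 1) : ℤ) - hVector (Iic A ∪ Iic B) i =
      unionBoxDiff (A 0) (A 1) (A 2) (B 0) (B 1) (B 2) i := by
  have hAB := natCast_hVector_Iic_succ_sub (A ⊓ B) i
  simp only [Pi.inf_apply, inf_eq_right.2 h₀, inf_eq_right.2 h₁, inf_eq_left.2 h₂] at hAB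
  have h := hVector_union_add_hVector_inter (Iic A) (Iic B) i
  have h' := hVector_union_add_hVector_inter (Iic A) (Iic B) (i + 1)
  rw [Finset.Iic_inter_Iic] at h h'
  have hA := natCast_hVector_Iic_succ_sub A i
  have hB := natCast_hVector_Iic_succ_sub B i
  simp only [unionBoxDiff]
  omega

lemma hVector_union_succ_le_of_succ_lt_fin_three {A B : Fin 3 → ℕ} (hdeg : monDeg A = monDeg B)
    (h₀ : B 0 ≤ A 0) (h₁ : B 1 ≤ A 1) (h₂ : A 2 ≤ B 2) {i i' : ℕ} (hii' : i < i')
    (hdec : hVector (Iic A ∪ Iic B) (i + 1) < hVector (Iic A ∪ Iic B) i) :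
    hVector (Iic A ∪ Iic B) (i' + 1) ≤ hVector (Iic A ∪ Iic B) i' := by
  simp only [monDeg, Fin.sum_univ_three] at hdeg
  have h := natCast_hVector_union_succ_sub h₀ h₁ h₂ i
  have h' := natCast_hVector_union_succ_sub h₀ h₁ h₂ i'
  have := unionBoxDiff_nonpos_of_neg h₀ h₁ h₂ hdeg hii' (by omega)
  omega

section ExtendByZero

open Function

variable {r s : ℕ} {f : Fin r → Fin s}

lemma monDeg_extend (hf : Injective f) (M : Fin r → ℕ) : monDeg (extend f M 0) = monDeg M :=
  (Fintype.sum_of_injective f hf M (extend f M 0) (fun _ hk => extend_apply' _ _ _ hk)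
    (fun j => (hf.extend_apply M 0 j).symm)).symm

lemma extend_apply_le_extend_apply (hf : Injective f) {M N : Fin r → ℕ} (k : Fin s)
    (h : ∀ j, f j = k → M j ≤ N j) : extend f M 0 k ≤ extend f N 0 k := by
  by_cases hk : ∃ j, f j = k
  · obtain ⟨j, rfl⟩ := hk
    simpa only [hf.extend_apply] using h j rfl
  · simp only [extend_apply' _ _ _ hk, le_refl]

lemma image_extend_Iic (hf : Injective f) (A : Fin r → ℕ) :
    (Iic A).image (extend f · 0) = Iic (extend f A 0) := by
  ext N
  simp only [mem_image, mem_Iic]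
  constructor
  · rintro ⟨M, hMA, rfl⟩
    exact fun k => extend_apply_le_extend_apply hf k fun j _ => hMA j
  · intro hN
    refine ⟨N ∘ f, fun j => (hN (f j)).trans (hf.extend_apply A 0 j).le, funext fun k => ?_⟩
    by_cases hk : ∃ j, f j = k
    · obtain ⟨j, rfl⟩ := hk
      exact hf.extend_apply _ _ _
    · simpa only [extend_apply' _ _ _ hk, Pi.zero_apply, nonpos_iff_eq_zero, eq_comm]
        using hN k

lemma hVector_image_extend (hf : Injective f) (Y : Finset (Fin r → ℕ)) (i : ℕ) :
    hVector (Y.image (extend f · 0)) i = hVector Y i := by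
  rw [hVector, filter_image, card_image_of_injective _ (extend_injective hf 0), hVector]
  simp only [monDeg_extend hf]

end ExtendByZero

lemma exists_lt_and_forall_ne_le {r : ℕ} (hr : r ≤ 3) {A B : Fin r → ℕ} (hAB : ¬A ≤ B)
    (hBA : ¬B ≤ A) :
    ∃ j₀, (A j₀ < B j₀ ∧ ∀ j ≠ j₀, B j ≤ A j) ∨ (B j₀ < A j₀ ∧ ∀ j ≠ j₀, A j ≤ B j) := by
  set S : Finset (Fin r) := {j | A j < B j}
  set S' : Finset (Fin r) := {j | B j < A j}
  have hcard : #S + #S' ≤ 3 := by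
    rw [← card_union_of_disjoint (disjoint_filter.2 fun _ _ h => h.not_gt)]
    exact (card_le_univ _).trans (by simpa using hr)
  obtain ⟨j₀, hj₀⟩ : ∃ j, A j < B j := by simpa [Pi.le_def] using hBA
  obtain ⟨j₁, hj₁⟩ : ∃ j, B j < A j := by simpa [Pi.le_def] using hAB
  have hS' : 0 < #S' := card_pos.2 ⟨j₁, by simpa [S'] using hj₁⟩
  rcases le_or_gt #S 1 with h | h
  · refine ⟨j₀, Or.inl ⟨hj₀, fun j hj => not_lt.1 fun hlt => hj ?_⟩⟩
    exact card_le_one.1 h j (by simpa [S] using hlt) j₀ (by simpa [S] using hj₀)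
  · refine ⟨j₁, Or.inr ⟨hj₁, fun j hj => not_lt.1 fun hlt => hj ?_⟩⟩
    exact card_le_one.1 (show #S' ≤ 1 by omega) j (by simpa [S'] using hlt) j₁
      (by simpa [S'] using hj₁)

lemma hVector_union_succ_le_of_succ_lt {r : ℕ} (hr : r ≤ 3) {A B : Fin r → ℕ} (hAB : A ≠ B)
    (hdeg : monDeg A = monDeg B) {i i' : ℕ} (hii' : i < i')
    (hdec : hVector (Iic A ∪ Iic B) (i + 1) < hVector (Iic A ∪ Iic B) i) :
    hVector (Iic A ∪ Iic B) (i' + 1) ≤ hVector (Iic A ∪ Iic B) i' := by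
  wlog hj : ∃ j₀, A j₀ < B j₀ ∧ ∀ j ≠ j₀, B j ≤ A j generalizing A B
  · have hinc {A B : Fin r → ℕ} (hAB : A ≠ B) (hdeg : monDeg A = monDeg B) : ¬A ≤ B :=
      fun hle => (monDeg_strictMono (hle.lt_of_ne hAB)).ne hdeg
    obtain ⟨j₀, h | h⟩ := exists_lt_and_forall_ne_le hr (hinc hAB hdeg) (hinc hAB.symm hdeg.symm)
    · exact absurd ⟨j₀, h⟩ hj
    · rw [union_comm] at hdec ⊢
      exact this hAB.symm hdeg.symm hdec ⟨j₀, h⟩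
  obtain ⟨j₀, hlt, hle⟩ := hj
  set f : Fin r → Fin 3 := Equiv.swap (Fin.castLE hr j₀) 2 ∘ Fin.castLE hr
  have hf : Function.Injective f := (Equiv.injective _).comp (Fin.castLE_injective hr)
  have hf₀ : f j₀ = 2 := Equiv.swap_apply_left _ _
  have hle' (k : Fin 3) (hk : k ≠ 2) : Function.extend f B 0 k ≤ Function.extend f A 0 k :=
    extend_apply_le_extend_apply hf k fun j hj => hle j fun h => hk (by rw [← hj, h, hf₀])
  have hlt' : Function.extend f A 0 2 ≤ Function.extend f B 0 2 := by
    simpa only [← hf₀, hf.extend_apply] using hlt.le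
  have hV : hVector (Iic A ∪ Iic B) =
      hVector (Iic (Function.extend f A 0) ∪ Iic (Function.extend f B 0)) := funext fun i => by
    rw [← image_extend_Iic hf, ← image_extend_Iic hf, ← image_union, hVector_image_extend hf]
  rw [hV] at hdec ⊢
  exact hVector_union_succ_le_of_succ_lt_fin_three (by simpa only [monDeg_extend hf] using hdeg)
    (hle' 0 (by decide)) (hle' 1 (by decide)) hlt' hii' hdec

/-- Every pure O-sequence of type 2 in at most three variables is
unimodal: the h-vector of a pure monomial order ideal in `r ≤ 3` variables with exactly
two maximal monomials is unimodal. -/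
theorem pure_type_two_three_vars_unimodal (r : ℕ) (hr : r ≤ 3)
    (X : Finset (Fin r → ℕ)) (e : ℕ) (h : ℕ → ℕ)
    (hpure : IsPureWithSocle X e)
    (htype : {M : Fin r → ℕ | IsMaxMon X M}.ncard = 2)
    (hh : HasHVector X h e) :
    ∃ j ≤ e, (∀ i, i < j → h i ≤ h (i + 1)) ∧
      ∀ i, j ≤ i → i < e → h (i + 1) ≤ h i := by
  obtain ⟨A, B, hAB, hA, hB, rfl⟩ := hpure.exists_eq_Iic_union_Iic htype
  refine exists_unimodal_of_no_valley h e fun i i' hii' hi' hdec => ?_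
  rw [hh (i + 1) (by omega), hh i (by omega)] at hdec
  rw [hh (i' + 1) hi', hh i' hi'.le]
  exact hVector_union_succ_le_of_succ_lt hr hAB (hA.trans hB.symm) hii' hdec
end

section
/- Let e ≥ 2 and h be integers with 0 ≤ h ≤ e − 1, and for i ≥ −1 set f_i = 2·C(e, i+1) − C(h, i+1) (this is the f-vector of the pure simplicial complex of type 2 whose two facets have cardinality e and share exactly h common vertices). Then for every integer a with 0 ≤ a ≤ ⌊e/2⌋ − 1 one has f_{⌊e/2⌋ − a − 1} > f_{⌊(e+1)/2⌋ + a}; equivalently, 2·C(e, ⌊e/2⌋ − a) − C(h, ⌊e/2⌋ − a) > 2·C(e, ⌊(e+1)/2⌋ + a + 1) − C(h, ⌊(e+1)/2⌋ + a + 1). -/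
/-- Strict increase of binomial coefficients below the middle. -/
lemma my_choose_strict_mono {n j : ℕ} (hj : 1 ≤ j) (hjn : 2 * j ≤ n) :
    Nat.choose n (j - 1) < Nat.choose n j := by
  cases j with
  | zero => omega
  | succ t =>
    simp only [Nat.add_sub_cancel]
    have key : Nat.choose n (t + 1) * (t + 1) = Nat.choose n t * (n - t) :=
      Nat.choose_succ_right_eq n t
    have htn : t ≤ n := by omega
    have hpos : 0 < Nat.choose n t := Nat.choose_pos htn
    have h1 : Nat.choose n t * (t + 1) < Nat.choose n t * (n - t) :=
      mul_lt_mul_of_pos_left (by omega) hpos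
    rw [← key] at h1
    exact Nat.lt_of_mul_lt_mul_right h1

/-- Weak increase of binomial coefficients up to (and including) the symmetric middle. -/
lemma my_choose_le_succ {n q : ℕ} (hq : 1 ≤ q) (hqn : 2 * q ≤ n + 1) :
    Nat.choose n (q - 1) ≤ Nat.choose n q := by
  rcases Nat.lt_or_ge (2 * q) (n + 1) with hlt | hge
  · exact le_of_lt (my_choose_strict_mono hq (by omega))
  · have h2 : 2 * q = n + 1 := le_antisymm hqn hge
    have hqn' : q ≤ n := by omega
    have : n - q = q - 1 := by omega
    rw [← this, Nat.choose_symm hqn']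

lemma my_choose_mono {n p q : ℕ} (hpq : p ≤ q) (hqn : 2 * q ≤ n + 1) :
    Nat.choose n p ≤ Nat.choose n q := by
  induction q with
  | zero =>
    have : p = 0 := by omega
    simp [this]
  | succ q ih =>
    rcases Nat.lt_or_ge p (q + 1) with hlt | hge
    · calc Nat.choose n p ≤ Nat.choose n q := ih (by omega) (by omega)
        _ ≤ Nat.choose n (q + 1) := by
            have := my_choose_le_succ (q := q + 1) (n := n) (by omega) hqn
            simpa using this
    · have : p = q + 1 := by omega
      rw [this]

/-- Cross-middle comparison: if `i ≤ j` and `n ≤ i + j`, then `C(n,j) ≤ C(n,i)`. -/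
lemma my_choose_cross {n i j : ℕ} (hij : i ≤ j) (hn : n ≤ i + j) :
    Nat.choose n j ≤ Nat.choose n i := by
  rcases Nat.lt_or_ge n j with hlt | hge
  · simp [Nat.choose_eq_zero_of_lt hlt]
  · have hsymm : Nat.choose n (n - j) = Nat.choose n j := Nat.choose_symm hge
    rw [← hsymm]
    rcases Nat.lt_or_ge n (2 * i) with h2 | h2
    · have hin : i ≤ n := le_trans hij hge
      have : Nat.choose n (n - i) = Nat.choose n i := Nat.choose_symm hin
      rw [← this]
      exact my_choose_mono (by omega) (by omega)
    · exact my_choose_mono (by omega) (by omega)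

/-- One Pascal step for the difference `C(h,k+1) - C(h,m+1)`. -/
lemma my_diff_step {h k m : ℕ} (hkm : k ≤ m) (hh : h ≤ k + m) :
    (Nat.choose h (k + 1) : ℤ) - Nat.choose h (m + 1) ≤
      (Nat.choose (h + 1) (k + 1) : ℤ) - Nat.choose (h + 1) (m + 1) := by
  have hk : Nat.choose (h + 1) (k + 1) = Nat.choose h k + Nat.choose h (k + 1) :=
    Nat.choose_succ_succ h k
  have hm : Nat.choose (h + 1) (m + 1) = Nat.choose h m + Nat.choose h (m + 1) :=
    Nat.choose_succ_succ h m
  have hcross : Nat.choose h m ≤ Nat.choose h k := my_choose_cross hkm hh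
  rw [hk, hm]
  push_cast
  have : (Nat.choose h m : ℤ) ≤ Nat.choose h k := by exact_mod_cast hcross
  linarith

/-- Monotonicity of the difference `C(h,k+1) - C(h,m+1)` in `h` (up to `k+m+1`). -/
lemma my_diff_mono {k m : ℕ} (hkm : k ≤ m) (h h' : ℕ) (hhh' : h ≤ h')
    (hbound : h' ≤ k + m + 1) :
    (Nat.choose h (k + 1) : ℤ) - Nat.choose h (m + 1) ≤
      (Nat.choose h' (k + 1) : ℤ) - Nat.choose h' (m + 1) := by
  obtain ⟨t, rfl⟩ := Nat.exists_eq_add_of_le hhh'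
  clear hhh'
  induction t with
  | zero => simp
  | succ t ih =>
    have heq : h + (t + 1) = (h + t) + 1 := by omega
    rw [heq]
    calc (Nat.choose h (k + 1) : ℤ) - Nat.choose h (m + 1)
        ≤ (Nat.choose (h + t) (k + 1) : ℤ) - Nat.choose (h + t) (m + 1) :=
          ih (by omega)
      _ ≤ _ := my_diff_step hkm (by omega)

/-- Let `e ≥ 2` and `0 ≤ h ≤ e − 1`, and consider the f-vector
`f_i = 2·C(e, i+1) − C(h, i+1)` of the pure type-2 simplicial complex whose two facets
have cardinality `e` and share `h` vertices.  Then for every `0 ≤ a ≤ ⌊e/2⌋ − 1`,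
`f_{⌊e/2⌋ − a − 1} > f_{⌊(e+1)/2⌋ + a}`, i.e.
`2·C(e, ⌊e/2⌋−a) − C(h, ⌊e/2⌋−a) > 2·C(e, ⌊(e+1)/2⌋+a+1) − C(h, ⌊(e+1)/2⌋+a+1)`. -/
theorem type_two_fvector_inequalities (e h a : ℕ) (he : 2 ≤ e) (hh : h ≤ e - 1)
    (ha : a ≤ e / 2 - 1) :
    2 * (Nat.choose e (e / 2 - a) : ℤ) - (Nat.choose h (e / 2 - a) : ℤ) >
      2 * (Nat.choose e ((e + 1) / 2 + a + 1) : ℤ) -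
        (Nat.choose h ((e + 1) / 2 + a + 1) : ℤ) := by
  obtain ⟨k1, hk1⟩ : ∃ k1, e / 2 - a = k1 + 1 := ⟨e / 2 - a - 1, by omega⟩
  obtain ⟨m1, hm1⟩ : ∃ m1, (e + 1) / 2 + a + 1 = m1 + 1 := ⟨(e + 1) / 2 + a, by omega⟩
  have hsum : k1 + m1 = e - 1 := by omega
  have hk2 : 2 * (k1 + 1) ≤ e := by omega
  have hk1m1 : k1 ≤ m1 := by omega
  rw [hk1, hm1]
  -- bound C(h,·) difference by the value at h = e-1
  have hdiff : (Nat.choose h (k1 + 1) : ℤ) - Nat.choose h (m1 + 1) ≤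
      (Nat.choose (e - 1) (k1 + 1) : ℤ) - Nat.choose (e - 1) (m1 + 1) :=
    my_diff_mono hk1m1 h (e - 1) hh (by omega)
  -- Pascal on e
  have hpk : Nat.choose e (k1 + 1) = Nat.choose (e - 1) k1 + Nat.choose (e - 1) (k1 + 1) := by
    have heq : e = (e - 1) + 1 := by omega
    rw [heq, Nat.choose_succ_succ]; simp
  have hpm : Nat.choose e (m1 + 1) = Nat.choose (e - 1) m1 + Nat.choose (e - 1) (m1 + 1) := by
    have heq : e = (e - 1) + 1 := by omega
    rw [heq, Nat.choose_succ_succ]; simp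
  -- symmetric equality C(e-1, m1) = C(e-1, k1)
  have hsym : Nat.choose (e - 1) m1 = Nat.choose (e - 1) k1 := by
    have hk1e : k1 ≤ e - 1 := by omega
    have heq : m1 = (e - 1) - k1 := by omega
    rw [heq, Nat.choose_symm hk1e]
  -- strict inequality C(e-1, m1+1) < C(e-1, k1+1)
  have hstrict : Nat.choose (e - 1) (m1 + 1) < Nat.choose (e - 1) (k1 + 1) := by
    rcases Nat.eq_zero_or_pos k1 with h1 | h1
    · -- k1 = 0 : m1 + 1 = e > e - 1, LHS = 0
      have hlt : e - 1 < m1 + 1 := by omega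
      rw [Nat.choose_eq_zero_of_lt hlt]
      exact Nat.choose_pos (by omega)
    · -- k1 ≥ 1 : C(e-1, m1+1) = C(e-1, k1-1) < C(e-1, k1) ≤ C(e-1, k1+1)
      have h1' : Nat.choose (e - 1) (m1 + 1) = Nat.choose (e - 1) (k1 - 1) := by
        have hk1le : k1 - 1 ≤ e - 1 := by omega
        have heq : m1 + 1 = (e - 1) - (k1 - 1) := by omega
        rw [heq, Nat.choose_symm hk1le]
      rw [h1']
      calc Nat.choose (e - 1) (k1 - 1) < Nat.choose (e - 1) k1 :=
            my_choose_strict_mono h1 (by omega)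
        _ ≤ Nat.choose (e - 1) (k1 + 1) := my_choose_mono (by omega) (by omega)
  rw [hpk, hpm]
  push_cast
  have hsymZ : (Nat.choose (e - 1) m1 : ℤ) = Nat.choose (e - 1) k1 := by exact_mod_cast hsym
  have hstrictZ : (Nat.choose (e - 1) (m1 + 1) : ℤ) < Nat.choose (e - 1) (k1 + 1) := by
    exact_mod_cast hstrict
  linarith
end
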